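/- arXiv:0711.3609 — 8 statements merged into one kernel-verified Lean document; each statement's English description precedes it below -/
import Mathlib

section
/- Let m ≤ n be positive integers, let L_1, …, L_{n−m+1} be m×n complex matrices, let 𝔄 be an (m−1)×n complex matrix of rank m−1, and let k = (k_1, …, k_{m−1}) ∈ ℂ^{m−1}. Let M be the m×n matrix whose i-th row, for 1 ≤ i ≤ m−1, is the i-th row of 𝔄, and whose m-th row is −∑_{j=1}^{m−1} k_j · (j-th row of 𝔄). Set κ = (k_1, …, k_{m−1}, 1) ∈ ℂ^m and for j = 1, …, n−m+1 let V_j = κ * L_j ∈ ℂ^n (the row vector obtained by multiplying the row vector κ by the matrix L_j). Then the linear subspace {X*M + M*Y : X an m×m complex matrix, Y an n×n complex matrix} of the space of m×n matrices, together with the linear span of L_1, …, L_{n−m+1}, spans the whole space of m×n complex matrices if and only if the determinant of the n×n matrix whose first m−1 rows are the rows of 𝔄 and whose last n−m+1 rows are V_1, …, V_{n−m+1} is nonzero. -/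
open Finset in
private lemma sum_split_aux {α : Type*} [AddCommMonoid α] {a b c : ℕ} (h : a + b = c)
    (f : Fin c → α) :
    ∑ i, f i = (∑ i : Fin a, f ⟨i, by omega⟩) + ∑ j : Fin b, f ⟨a + (j : ℕ), by omega⟩ := by
  subst h
  exact Fin.sum_univ_add f

open Finset in
private lemma sum_split_last {α : Type*} [AddCommMonoid α] {m : ℕ} (hm : 0 < m)
    (f : Fin m → α) :
    ∑ i, f i = (∑ i : Fin (m - 1), f ⟨i, by omega⟩) + f ⟨m - 1, by omega⟩ := by
  obtain ⟨p, rfl⟩ : ∃ p, m = p + 1 := ⟨m - 1, by omega⟩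
  exact Fin.sum_univ_castSucc f

private lemma vecMul_eq_sum_rows {p q : ℕ} (v : Fin p → ℂ) (A : Matrix (Fin p) (Fin q) ℂ) :
    Matrix.vecMul v A = ∑ i, v i • A i := by
  funext j
  simp [Matrix.vecMul, dotProduct, Finset.sum_apply]


/-- **Determinantal description of the critical value set** (Theorem 3).
Let `m ≤ n`, let `L₁, …, L_{n-m+1}` be `m × n` complex matrices, let `𝔄` be an
`(m-1) × n` matrix of rank `m - 1` and `k ∈ ℂ^{m-1}`.  Let `M` be the `m × n` matrix
whose first `m - 1` rows are those of `𝔄` and whose last row is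
`-∑ⱼ kⱼ · (j-th row of 𝔄)`, set `κ = (k₁, …, k_{m-1}, 1)` and `Vⱼ = κ * Lⱼ`.
Then the tangent space `{X*M + M*Y}` together with the span of the `Lⱼ` spans the whole
space of `m × n` matrices iff the determinant of the `n × n` matrix with first `m - 1`
rows those of `𝔄` and last `n - m + 1` rows `V₁, …, V_{n-m+1}` is nonzero. -/
theorem critical_values_determinantal (m n : ℕ) (hm : 0 < m) (hmn : m ≤ n)
    (L : Fin (n - m + 1) → Matrix (Fin m) (Fin n) ℂ)
    (𝔄 : Matrix (Fin (m - 1)) (Fin n) ℂ) (hrank : 𝔄.rank = m - 1)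
    (k : Fin (m - 1) → ℂ)
    (M : Matrix (Fin m) (Fin n) ℂ)
    (hM : ∀ (i : Fin m) (j : Fin n),
      M i j = if h : (i : ℕ) < m - 1 then 𝔄 ⟨i, h⟩ j
              else -∑ l : Fin (m - 1), k l * 𝔄 l j)
    (κ : Fin m → ℂ)
    (hκ : ∀ i : Fin m, κ i = if h : (i : ℕ) < m - 1 then k ⟨i, h⟩ else 1)
    (V : Fin (n - m + 1) → Fin n → ℂ)
    (hV : ∀ j, V j = Matrix.vecMul κ (L j))
    (N : Matrix (Fin n) (Fin n) ℂ)
    (hN : ∀ (r c : Fin n),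
      N r c = if h : (r : ℕ) < m - 1 then 𝔄 ⟨r, h⟩ c
              else V ⟨(r : ℕ) - (m - 1), by have := r.isLt; omega⟩ c) :
    Submodule.span ℂ
        ({P : Matrix (Fin m) (Fin n) ℂ |
            ∃ (X : Matrix (Fin m) (Fin m) ℂ) (Y : Matrix (Fin n) (Fin n) ℂ),
              P = X * M + M * Y} ∪ Set.range L) = ⊤ ↔
      N.det ≠ 0 := by
  classical
  have hm1 : m - 1 < m := by omega
  let lastm : Fin m := ⟨m - 1, hm1⟩
  let eM : Fin (m - 1) → Fin m := fun i => ⟨i, by have := i.isLt; omega⟩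
  let e1 : Fin (m - 1) → Fin n := fun i => ⟨i, by have := i.isLt; omega⟩
  let e2 : Fin (n - m + 1) → Fin n := fun j => ⟨m - 1 + j, by have := j.isLt; omega⟩
  -- pointwise facts
  have hκlast : κ lastm = 1 := by rw [hκ]; exact dif_neg (Nat.lt_irrefl _)
  have hκe : ∀ i : Fin (m - 1), κ (eM i) = k i := by
    intro i; rw [hκ, dif_pos i.isLt]
  have hMe : ∀ i : Fin (m - 1), M (eM i) = 𝔄 i := by
    intro i; funext j; rw [hM, dif_pos i.isLt]
  have hMlast : ∀ j, M lastm j = -∑ l, k l * 𝔄 l j := by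
    intro j; rw [hM]; exact dif_neg (Nat.lt_irrefl _)
  have hNe1 : ∀ i : Fin (m - 1), N (e1 i) = 𝔄 i := by
    intro i; funext c; rw [hN, dif_pos i.isLt]
  have hNe2 : ∀ j : Fin (n - m + 1), N (e2 j) = V j := by
    intro j; funext c
    rw [hN, dif_neg (Nat.not_lt.mpr (Nat.le_add_right _ _))]
    congr 1
    exact Fin.ext (by show m - 1 + (j : ℕ) - (m - 1) = (j : ℕ); omega)
  -- the linear map P ↦ κ ᵥ* P
  let φ : Matrix (Fin m) (Fin n) ℂ →ₗ[ℂ] (Fin n → ℂ) :=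
    { toFun := fun P => Matrix.vecMul κ P
      map_add' := fun A B => Matrix.vecMul_add A B κ
      map_smul' := fun c A => by
        funext j
        simp [Matrix.vecMul, dotProduct, Finset.mul_sum, mul_left_comm] }
  have hφ : ∀ P, φ P = Matrix.vecMul κ P := fun _ => rfl
  have hφsurj : Function.Surjective φ := by
    intro w
    refine ⟨fun i j => if i = lastm then w j else 0, ?_⟩
    funext j
    show (∑ i, κ i * if i = lastm then w j else 0) = w j
    rw [Finset.sum_eq_single lastm]
    · simp [hκlast]
    · intro b _ hb; simp [hb]
    · intro h; exact absurd (Finset.mem_univ _) h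
  -- κ is in the left kernel of M
  have hκM : Matrix.vecMul κ M = 0 := by
    funext j
    show (∑ i, κ i * M i j) = 0
    rw [sum_split_last hm (f := fun i => κ i * M i j)]
    have h1 : ∀ i : Fin (m - 1),
        κ (⟨(i : ℕ), by have := i.isLt; omega⟩ : Fin m) * M ⟨(i : ℕ), by have := i.isLt; omega⟩ j
          = k i * 𝔄 i j := by
      intro i; rw [hκe i, hMe i]
    rw [Finset.sum_congr rfl fun i _ => h1 i]
    rw [show κ (⟨m - 1, by omega⟩ : Fin m) = 1 from hκlast,
      show M (⟨m - 1, by omega⟩ : Fin m) j = -∑ l, k l * 𝔄 l j from hMlast j]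
    ring
  -- every row of M lies in the row span of 𝔄
  have hrowM : ∀ i : Fin m, M i ∈ Submodule.span ℂ (Set.range 𝔄) := by
    intro i
    by_cases h : (i : ℕ) < m - 1
    · have : M i = 𝔄 ⟨i, h⟩ := by funext j; rw [hM, dif_pos h]
      rw [this]; exact Submodule.subset_span ⟨_, rfl⟩
    · have : M i = -∑ l, k l • 𝔄 l := by
        funext j; rw [hM, dif_neg h]
        simp [Finset.sum_apply]
      rw [this]
      exact Submodule.neg_mem _ (Submodule.sum_mem _ fun l _ =>
        Submodule.smul_mem _ _ (Submodule.subset_span ⟨l, rfl⟩))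
  have hT1 : ∀ c : Fin m → ℂ, Matrix.vecMul c M ∈ Submodule.span ℂ (Set.range 𝔄) := by
    intro c
    rw [vecMul_eq_sum_rows]
    exact Submodule.sum_mem _ fun i _ => Submodule.smul_mem _ _ (hrowM i)
  -- right inverse of 𝔄
  have hsurjA : Function.Surjective 𝔄.mulVec := by
    have h1 : LinearMap.range 𝔄.mulVecLin = ⊤ := by
      apply Submodule.eq_top_of_finrank_eq
      rw [show Module.finrank ℂ ↥(LinearMap.range 𝔄.mulVecLin) = 𝔄.rank from rfl, hrank,
        Module.finrank_fintype_fun_eq_card, Fintype.card_fin]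
    have h2 := LinearMap.range_eq_top.mp h1
    intro w
    obtain ⟨v, hv⟩ := h2 w
    exact ⟨v, by rw [← Matrix.mulVecLin_apply]; exact hv⟩
  obtain ⟨R, hAR⟩ := Matrix.mulVec_surjective_iff_exists_right_inverse.mp hsurjA
  -- key converse: if κ ᵥ* Q lies in the row span of 𝔄 then Q is a tangent vector
  have hT2 : ∀ Q : Matrix (Fin m) (Fin n) ℂ,
      Matrix.vecMul κ Q ∈ Submodule.span ℂ (Set.range 𝔄) →
      ∃ (X : Matrix (Fin m) (Fin m) ℂ) (Y : Matrix (Fin n) (Fin n) ℂ), Q = X * M + M * Y := by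
    intro Q hQ
    obtain ⟨c, hc⟩ := (Submodule.mem_span_range_iff_exists_fun ℂ).mp hQ
    let d : Fin m → ℂ := fun i => if h : (i : ℕ) < m - 1 then c ⟨i, h⟩ else 0
    let X : Matrix (Fin m) (Fin m) ℂ := fun i j => if i = lastm then d j else 0
    have hκX : Matrix.vecMul κ X = d := by
      funext j
      show (∑ i, κ i * if i = lastm then d j else 0) = d j
      rw [Finset.sum_eq_single lastm]
      · simp [hκlast]
      · intro b _ hb; simp [hb]
      · intro h; exact absurd (Finset.mem_univ _) h
    have hdM : Matrix.vecMul d M = Matrix.vecMul κ Q := by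
      rw [← hc]
      funext j
      show (∑ i, d i * M i j) = _
      rw [sum_split_last hm (f := fun i => d i * M i j)]
      have h1 : ∀ i : Fin (m - 1),
          d (⟨(i : ℕ), by have := i.isLt; omega⟩ : Fin m)
              * M ⟨(i : ℕ), by have := i.isLt; omega⟩ j
            = c i * 𝔄 i j := by
        intro i
        rw [hMe i]
        congr 1
        exact dif_pos i.isLt
      rw [Finset.sum_congr rfl fun i _ => h1 i,
        show d (⟨m - 1, by omega⟩ : Fin m) = 0 from dif_neg (Nat.lt_irrefl _)]
      simp [Finset.sum_apply]
    set Q' : Matrix (Fin m) (Fin n) ℂ := Q - X * M with hQ'def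
    have hκQ' : Matrix.vecMul κ Q' = 0 := by
      rw [hQ'def, Matrix.vecMul_sub, ← Matrix.vecMul_vecMul, hκX, hdM, sub_self]
    have hrel : ∀ j, Q' lastm j = -∑ l : Fin (m - 1), k l * Q' (eM l) j := by
      intro j
      have h0 := congrFun hκQ' j
      rw [show Matrix.vecMul κ Q' j = ∑ i, κ i * Q' i j from rfl,
        sum_split_last hm (f := fun i => κ i * Q' i j)] at h0
      have h1 : ∀ i : Fin (m - 1),
          κ (⟨(i : ℕ), by have := i.isLt; omega⟩ : Fin m)
              * Q' ⟨(i : ℕ), by have := i.isLt; omega⟩ j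
            = k i * Q' (eM i) j := by
        intro i; rw [hκe i]
      rw [Finset.sum_congr rfl fun i _ => h1 i,
        show κ (⟨m - 1, by omega⟩ : Fin m) = 1 from hκlast] at h0
      have h2 : Q' (⟨m - 1, by omega⟩ : Fin m) j = Q' lastm j := rfl
      rw [h2] at h0
      simp only [Pi.zero_apply] at h0
      linear_combination h0
    let B : Matrix (Fin (m - 1)) (Fin n) ℂ := Matrix.of fun i j => Q' (eM i) j
    have hMR : M * R = Matrix.of (fun (i : Fin m) (l : Fin (m - 1)) =>
        if h : (i : ℕ) < m - 1 then (1 : Matrix (Fin (m - 1)) (Fin (m - 1)) ℂ) ⟨i, h⟩ l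
        else -(k l)) := by
      funext i l
      rw [Matrix.mul_apply]
      by_cases h : (i : ℕ) < m - 1
      · have hrow : ∀ p, M i p = 𝔄 ⟨i, h⟩ p := fun p => by rw [hM, dif_pos h]
        simp only [Matrix.of_apply, dif_pos h]
        rw [← hAR, Matrix.mul_apply]
        exact Finset.sum_congr rfl fun p _ => by rw [hrow p]
      · have hrow : ∀ p, M i p = -∑ t, k t * 𝔄 t p := fun p => by rw [hM, dif_neg h]
        simp only [Matrix.of_apply, dif_neg h]
        calc ∑ p, M i p * R p l
            = ∑ p, (-∑ t, k t * 𝔄 t p) * R p l :=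
              Finset.sum_congr rfl fun p _ => by rw [hrow p]
          _ = -∑ t, k t * ∑ p, 𝔄 t p * R p l := by
              simp only [neg_mul, Finset.sum_neg_distrib]
              congr 1
              simp only [Finset.sum_mul]
              rw [Finset.sum_comm]
              exact Finset.sum_congr rfl fun t _ => by
                rw [Finset.mul_sum]
                exact Finset.sum_congr rfl fun p _ => by ring
          _ = -∑ t, k t * (1 : Matrix (Fin (m - 1)) (Fin (m - 1)) ℂ) t l := by
              congr 1
              exact Finset.sum_congr rfl fun t _ => by rw [← Matrix.mul_apply, hAR]
          _ = -(k l) := by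
              simp [Matrix.one_apply, mul_ite, Finset.sum_ite_eq]
    have key : M * (R * B) = Q' := by
      rw [← Matrix.mul_assoc, hMR]
      funext i j
      rw [Matrix.mul_apply]
      by_cases h : (i : ℕ) < m - 1
      · simp only [Matrix.of_apply, dif_pos h]
        rw [Finset.sum_congr rfl fun l _ => by rw [Matrix.one_apply]]
        simp only [ite_mul, one_mul, zero_mul, Finset.sum_ite_eq, Finset.mem_univ, if_true]
        show Q' (eM ⟨(i : ℕ), h⟩) j = Q' i j
        rfl
      · simp only [Matrix.of_apply, dif_neg h]
        have hi : i = lastm := Fin.ext (by have := i.isLt; show (i : ℕ) = m - 1; omega)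
        rw [hi, hrel j]
        simp only [neg_mul, Finset.sum_neg_distrib]
        rfl
    refine ⟨X, R * B, ?_⟩
    rw [key, hQ'def]
    abel
  -- span of rows of 𝔄 is contained in span of rows of N
  have hAN : Submodule.span ℂ (Set.range 𝔄) ≤ Submodule.span ℂ (Set.range N) := by
    apply Submodule.span_le.mpr
    rintro _ ⟨i, rfl⟩
    rw [← hNe1 i]
    exact Submodule.subset_span ⟨e1 i, rfl⟩
  constructor
  · -- if the span is everything then det N ≠ 0
    intro htop
    have hNtop : Submodule.span ℂ (Set.range N) = ⊤ := by
      have hmap : Submodule.map φ (Submodule.span ℂ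
          ({P : Matrix (Fin m) (Fin n) ℂ |
            ∃ (X : Matrix (Fin m) (Fin m) ℂ) (Y : Matrix (Fin n) (Fin n) ℂ),
              P = X * M + M * Y} ∪ Set.range L)) ≤ Submodule.span ℂ (Set.range N) := by
        rw [Submodule.map_span]
        apply Submodule.span_le.mpr
        rintro _ ⟨P, hP, rfl⟩
        rcases hP with ⟨X, Y, rfl⟩ | ⟨j, rfl⟩
        · have : φ (X * M + M * Y) = Matrix.vecMul (Matrix.vecMul κ X) M := by
            rw [hφ, Matrix.vecMul_add, ← Matrix.vecMul_vecMul, ← Matrix.vecMul_vecMul, hκM,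
              Matrix.zero_vecMul, add_zero]
          rw [this]
          exact hAN (hT1 _)
        · have : φ (L j) = V j := by rw [hφ, hV]
          rw [this, ← hNe2 j]
          exact Submodule.subset_span ⟨e2 j, rfl⟩
      rw [htop, Submodule.map_top, LinearMap.range_eq_top.mpr hφsurj] at hmap
      exact top_le_iff.mp hmap
    have hNsurj : Function.Surjective N.vecMul := by
      intro w
      have hw : w ∈ LinearMap.range N.vecMulLinear := by
        rw [range_vecMulLinear, Matrix.row, hNtop]; trivial
      obtain ⟨v, hv⟩ := hw
      exact ⟨v, by rwa [Matrix.vecMulLinear_apply] at hv⟩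
    obtain ⟨C, hC⟩ := Matrix.vecMul_surjective_iff_exists_left_inverse.mp hNsurj
    intro hdet0
    have h1 := congrArg Matrix.det hC
    rw [Matrix.det_mul, hdet0, mul_zero, Matrix.det_one] at h1
    exact zero_ne_one h1
  · -- if det N ≠ 0 then the span is everything
    intro hdet
    have hNsurj : Function.Surjective N.vecMul :=
      Matrix.vecMul_surjective_iff_isUnit.mpr ((Matrix.isUnit_iff_isUnit_det N).mpr hdet.isUnit)
    rw [eq_top_iff]
    rintro P -
    obtain ⟨v, hv⟩ := hNsurj (Matrix.vecMul κ P)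
    have hv' : Matrix.vecMul v N = Matrix.vecMul κ P := hv
    have hP2mem : (∑ j, v (e2 j) • L j) ∈ Submodule.span ℂ
        ({P : Matrix (Fin m) (Fin n) ℂ |
            ∃ (X : Matrix (Fin m) (Fin m) ℂ) (Y : Matrix (Fin n) (Fin n) ℂ),
              P = X * M + M * Y} ∪ Set.range L) :=
      Submodule.sum_mem _ fun j _ => Submodule.smul_mem _ _
        (Submodule.subset_span (Or.inr ⟨j, rfl⟩))
    have hφQ : Matrix.vecMul κ (P - ∑ j, v (e2 j) • L j)
        = ∑ i : Fin (m - 1), v (e1 i) • 𝔄 i := by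
      have hs : φ (∑ j, v (e2 j) • L j) = ∑ j, v (e2 j) • V j := by
        rw [map_sum]
        exact Finset.sum_congr rfl fun j _ => by rw [map_smul, hφ, hV]
      have hsplit : Matrix.vecMul v N
          = (∑ i : Fin (m - 1), v (e1 i) • N (e1 i)) + ∑ j, v (e2 j) • N (e2 j) := by
        rw [vecMul_eq_sum_rows]
        exact sum_split_aux (by omega) fun r => v r • N r
      have := map_sub φ P (∑ j, v (e2 j) • L j)
      rw [hφ, hs, hφ, ← hv', hsplit] at this
      rw [this]
      have h1 : ∀ i : Fin (m - 1), v (e1 i) • N (e1 i) = v (e1 i) • 𝔄 i := fun i => by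
        rw [hNe1 i]
      have h2 : ∀ j, v (e2 j) • N (e2 j) = v (e2 j) • V j := fun j => by rw [hNe2 j]
      rw [Finset.sum_congr rfl fun i _ => h1 i, Finset.sum_congr rfl fun j _ => h2 j]
      abel
    have hQmem : Matrix.vecMul κ (P - ∑ j, v (e2 j) • L j)
        ∈ Submodule.span ℂ (Set.range 𝔄) := by
      rw [hφQ]
      exact Submodule.sum_mem _ fun i _ => Submodule.smul_mem _ _
        (Submodule.subset_span ⟨i, rfl⟩)
    obtain ⟨X, Y, hXY⟩ := hT2 _ hQmem
    have hPsum : P = (X * M + M * Y) + ∑ j, v (e2 j) • L j := by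
      rw [← hXY]; abel
    rw [hPsum]
    exact Submodule.add_mem _ (Submodule.subset_span (Or.inl ⟨X, Y, rfl⟩)) hP2mem
end

section
/- Let m ≤ n be positive integers and let A = (a_{i,j}) be an m×n complex matrix that is upper triangular (a_{i,j} = 0 whenever i > j) and has pairwise distinct entries a_{1,1}, …, a_{m,m} on the first main diagonal. Then for every λ = (λ_1, …, λ_{n−m+1}) ∈ ℂ^{n−m+1}, the matrix A + λ_1 J_1 + λ_2 J_2 + … + λ_{n−m+1} J_{n−m+1} has rank at least m − 1; equivalently, the space of row vectors v ∈ ℂ^m with v*(A + ∑_s λ_s J_s) = 0 has dimension at most 1. -/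
/-- The `s`-th diagonal unit `m × n` matrix (0-indexed `s`): its `(i,j)` entry is `1`
if `j = i + s` and `0` otherwise. -/
def J (m n : ℕ) (s : Fin (n - m + 1)) : Matrix (Fin m) (Fin n) ℂ :=
  Matrix.of fun i j => if (j : ℕ) = (i : ℕ) + (s : ℕ) then 1 else 0

/-- If `A` is an upper-triangular `m × n` complex matrix (`m ≤ n`) with pairwise
distinct entries on the first main diagonal, then every member
`A + λ₁ J₁ + ⋯ + λ_{n-m+1} J_{n-m+1}` of the pencil has rank at least `m - 1`;
equivalently, its left kernel has dimension at most `1`. -/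
theorem corank_at_most_one (m n : ℕ) (hm : 0 < m) (hmn : m ≤ n)
    (A : Matrix (Fin m) (Fin n) ℂ)
    (hupper : ∀ (i : Fin m) (j : Fin n), (j : ℕ) < (i : ℕ) → A i j = 0)
    (hdiag : Function.Injective fun i : Fin m => A i (Fin.castLE hmn i))
    (lam : Fin (n - m + 1) → ℂ) :
    m - 1 ≤ (A + ∑ s : Fin (n - m + 1), lam s • J m n s).rank ∧
      Module.finrank ℂ
        ↥(LinearMap.ker
          (Matrix.vecMulLinear (A + ∑ s : Fin (n - m + 1), lam s • J m n s))) ≤ 1 := by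
  set B : Matrix (Fin m) (Fin n) ℂ := A + ∑ s : Fin (n - m + 1), lam s • J m n s with hB
  have hBlow : ∀ (i : Fin m) (j : Fin n), (j : ℕ) < (i : ℕ) → B i j = 0 := by
    intro i j hij
    simp only [hB, Matrix.add_apply, Matrix.sum_apply, Matrix.smul_apply, J, Matrix.of_apply,
      smul_eq_mul]
    rw [hupper i j hij, Finset.sum_eq_zero, add_zero]
    intro s _
    rw [if_neg (by omega), mul_zero]
  have hBdiag : ∀ i : Fin m, B i (Fin.castLE hmn i) = A i (Fin.castLE hmn i) + lam 0 := by
    intro i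
    simp only [hB, Matrix.add_apply, Matrix.sum_apply, Matrix.smul_apply, J, Matrix.of_apply,
      smul_eq_mul]
    congr 1
    rw [Finset.sum_eq_single (0 : Fin (n - m + 1))]
    · simp [Fin.castLE]
    · intro s _ hs
      have hs' : (s : ℕ) ≠ 0 := by
        intro h
        exact hs (Fin.ext (by simpa using h))
      rw [if_neg (by simp [Fin.castLE]; omega), mul_zero]
    · simp
  set D : Fin m → ℂ := fun i => B i (Fin.castLE hmn i) with hD
  have hDinj : Function.Injective D := by
    intro i j h
    apply hdiag
    simp only [hD, hBdiag] at h
    simpa using add_right_cancel h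
  obtain ⟨k, hk⟩ : ∃ k : Fin m, ∀ i, i ≠ k → D i ≠ 0 := by
    by_cases h : ∃ i, D i = 0
    · obtain ⟨k, hk0⟩ := h
      exact ⟨k, fun i hi h0 => hi (hDinj (h0.trans hk0.symm))⟩
    · exact ⟨⟨0, hm⟩, fun i _ h0 => h ⟨i, h0⟩⟩
  -- key: any kernel vector vanishing at k is zero
  have key : ∀ v ∈ LinearMap.ker B.vecMulLinear, v k = 0 → v = 0 := by
    intro v hv hvk
    have hv' : ∀ j : Fin n, ∑ i, v i * B i j = 0 := by
      intro j
      have := congrFun (LinearMap.mem_ker.mp hv) j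
      simpa [Matrix.vecMulLinear_apply, Matrix.vecMul, dotProduct] using this
    have hzero : ∀ N, ∀ i : Fin m, (i : ℕ) < N → v i = 0 := by
      intro N
      induction N with
      | zero => exact fun i h => absurd h (Nat.not_lt_zero _)
      | succ N IH =>
        intro i hi
        have hcol := hv' (Fin.castLE hmn i)
        have hsum : ∑ i', v i' * B i' (Fin.castLE hmn i) = v i * D i := by
          refine Finset.sum_eq_single i (fun i' _ hne => ?_) (by simp)
          rcases lt_or_gt_of_ne (Fin.val_ne_of_ne hne) with hlt | hgt
          · rw [IH i' (by omega), zero_mul]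
          · rw [hBlow i' (Fin.castLE hmn i) (by simpa using hgt), mul_zero]
        rw [hsum] at hcol
        rcases mul_eq_zero.mp hcol with h | h
        · exact h
        · by_cases hik : i = k
          · rw [hik]; exact hvk
          · exact absurd h (hk i hik)
    funext i
    exact hzero (i + 1) i (Nat.lt_succ_self _)
  have hker : Module.finrank ℂ ↥(LinearMap.ker B.vecMulLinear) ≤ 1 := by
    let φ : ↥(LinearMap.ker B.vecMulLinear) →ₗ[ℂ] ℂ :=
      (LinearMap.proj k).comp (LinearMap.ker B.vecMulLinear).subtype
    have hφ : Function.Injective φ := by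
      rw [← LinearMap.ker_eq_bot]
      rw [Submodule.eq_bot_iff]
      intro x hx
      have : (x : Fin m → ℂ) = 0 := key x.1 x.2 hx
      exact Subtype.ext this
    have := LinearMap.finrank_le_finrank_of_injective hφ
    simpa using this
  refine ⟨?_, hker⟩
  have hrank : B.rank = Module.finrank ℂ ↥(LinearMap.range B.vecMulLinear) := by
    rw [← Matrix.rank_transpose, Matrix.rank, Matrix.mulVecLin_transpose]
  have hrn := LinearMap.finrank_range_add_finrank_ker B.vecMulLinear
  rw [Module.finrank_pi, Fintype.card_fin] at hrn
  rw [hrank]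
  omega
end

section
/- Let m ≤ n be positive integers and let A = (a_{i,j}) be an m×n complex matrix that is upper triangular (a_{i,j} = 0 whenever i > j) and has pairwise distinct entries a_{1,1}, …, a_{m,m} on the first main diagonal. Fix i ∈ {1, …, m} and let λ = (λ_1, …, λ_{n−m+1}) ∈ ℂ^{n−m+1} with λ_1 = −a_{i,i}. Then every nonzero row vector v = (v_1, …, v_m) ∈ ℂ^m satisfying v*(A + λ_1 J_1 + … + λ_{n−m+1} J_{n−m+1}) = 0 has v_j = 0 for all j < i and v_i ≠ 0. -/
/-- If `A` is an upper-triangular `m × n` complex matrix (`m ≤ n`) with pairwise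
distinct diagonal entries, `λ₁ = -a_{i,i}`, and `v ≠ 0` is a left-kernel vector of
`A + λ₁ J₁ + ⋯ + λ_{n-m+1} J_{n-m+1}`, then `v_j = 0` for all `j < i` and `v_i ≠ 0`. -/
theorem kernel_vector_support (m n : ℕ) (hm : 0 < m) (hmn : m ≤ n)
    (A : Matrix (Fin m) (Fin n) ℂ)
    (hupper : ∀ (i : Fin m) (j : Fin n), (j : ℕ) < (i : ℕ) → A i j = 0)
    (hdiag : Function.Injective fun i : Fin m => A i (Fin.castLE hmn i))
    (i : Fin m) (lam : Fin (n - m + 1) → ℂ)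
    (hlam1 : lam ⟨0, Nat.succ_pos _⟩ = -A i (Fin.castLE hmn i))
    (v : Fin m → ℂ) (hv : v ≠ 0)
    (hker : Matrix.vecMul v (A + ∑ s : Fin (n - m + 1), lam s • J m n s) = 0) :
    (∀ j : Fin m, (j : ℕ) < (i : ℕ) → v j = 0) ∧ v i ≠ 0 := by
  classical
  set B := A + ∑ s : Fin (n - m + 1), lam s • J m n s with hB
  have key : ∀ j : Fin m, (∀ k : Fin m, k < j → v k = 0) →
      v j * (A j (Fin.castLE hmn j) - A i (Fin.castLE hmn i)) = 0 := by
    intro j hj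
    have h := congrFun hker (Fin.castLE hmn j)
    simp only [Matrix.vecMul, dotProduct, Pi.zero_apply] at h
    have hdiagB : B j (Fin.castLE hmn j)
        = A j (Fin.castLE hmn j) - A i (Fin.castLE hmn i) := by
      simp only [hB, Matrix.add_apply, Matrix.sum_apply, Matrix.smul_apply, J,
        Matrix.of_apply, smul_eq_mul]
      rw [Finset.sum_eq_single (⟨0, Nat.succ_pos _⟩ : Fin (n - m + 1))]
      · rw [hlam1]; simp; ring
      · intro s _ hs
        have hs0 : (s : ℕ) ≠ 0 := fun h0 => hs (Fin.ext h0)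
        simp only [Fin.coe_castLE]
        rw [if_neg (by omega), mul_zero]
      · simp
    have hsum : (∑ k, v k * B k (Fin.castLE hmn j)) = v j * B j (Fin.castLE hmn j) := by
      apply Finset.sum_eq_single
      · intro k _ hk
        rcases lt_or_gt_of_ne hk with hlt | hgt
        · simp [hj k hlt]
        · have hBk : B k (Fin.castLE hmn j) = 0 := by
            simp only [hB, Matrix.add_apply, Matrix.sum_apply, Matrix.smul_apply, J,
              Matrix.of_apply, smul_eq_mul]
            rw [hupper k _ (by simpa using hgt)]
            rw [Finset.sum_eq_zero, zero_add]
            intro s _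
            have hjk : (j : ℕ) < (k : ℕ) := hgt
            simp only [Fin.coe_castLE]
            rw [if_neg (by omega), mul_zero]
          simp [hBk]
      · simp
    rw [hsum, hdiagB] at h
    exact h
  have hne : ∀ j : Fin m, j ≠ i → A j (Fin.castLE hmn j) - A i (Fin.castLE hmn i) ≠ 0 :=
    fun j hji => sub_ne_zero.mpr (fun h => hji (hdiag h))
  have zero_lt : ∀ N : ℕ, ∀ j : Fin m, (j : ℕ) = N → j < i → v j = 0 := by
    intro N
    induction N using Nat.strong_induction_on with
    | _ N ih =>
      intro j hjN hji
      have hk : ∀ k : Fin m, k < j → v k = 0 := fun k hk =>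
        ih k (hjN ▸ hk) k rfl (hk.trans hji)
      exact (mul_eq_zero.mp (key j hk)).resolve_right (hne j (ne_of_lt hji))
  refine ⟨fun j hj => zero_lt j j rfl hj, ?_⟩
  intro hvi
  have allzero : ∀ N : ℕ, ∀ j : Fin m, (j : ℕ) = N → v j = 0 := by
    intro N
    induction N using Nat.strong_induction_on with
    | _ N ih =>
      intro j hjN
      by_cases hji : j = i
      · rw [hji]; exact hvi
      · have hk : ∀ k : Fin m, k < j → v k = 0 := fun k hk => ih k (hjN ▸ hk) k rfl
        exact (mul_eq_zero.mp (key j hk)).resolve_right (hne j hji)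
  exact hv (funext fun j => allzero j j rfl)
end

section
/- Let m ≤ n be positive integers and let A = (a_{i,j}) be an m×n complex matrix that is upper triangular (a_{i,j} = 0 whenever i > j) and has pairwise distinct entries a_{1,1}, …, a_{m,m} on the first main diagonal. Let λ_2, …, λ_{n−m+1} ∈ ℂ be arbitrary, set λ_1 = −a_{1,1}, and adopt the convention λ_t = 0 for t > n−m+1 or t ≤ 0. Define k_1 = 1 and, recursively for i = 2, …, m, k_i = (a_{1,1} − a_{i,i})^{−1} · ∑_{j=1}^{i−1} k_j (a_{j,i} + λ_{i−j+1}). Then the matrix A + λ_1 J_1 + λ_2 J_2 + … + λ_{n−m+1} J_{n−m+1} has rank less than m if and only if the n − m equations ∑_{j=1}^{m} k_j (a_{j,l} + λ_{l−j+1}) = 0 hold for every l = m+1, …, n. -/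
private lemma sum_Icc_one_eq_range (M : ℕ) (f : ℕ → ℂ) :
    ∑ p ∈ Finset.Icc 1 M, f p = ∑ q ∈ Finset.range M, f (q + 1) := by
  induction M with
  | zero => simp
  | succ M ih =>
    rw [Finset.sum_Icc_succ_top (by omega), ih, Finset.sum_range_succ]

/-- Heine's defining system for the component `λ₁ = -a_{1,1}` of the eigenvalue locus:
with `k₁ = 1` and `k_i` defined by the recursion
`k_i = (a_{1,1} - a_{i,i})⁻¹ ∑_{j=1}^{i-1} k_j (a_{j,i} + λ_{i-j+1})`,
the matrix `A + λ₁ J₁ + ⋯ + λ_{n-m+1} J_{n-m+1}` (with `λ₁ = -a_{1,1}`) has rank `< m`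
iff `∑_{j=1}^{m} k_j (a_{j,l} + λ_{l-j+1}) = 0` for all `l = m+1, …, n`.
Here `a p q` denotes the `(p,q)` entry of `A` in 1-based indexing, and `λ_t = 0`
for `t = 0` or `t > n - m + 1`. -/
theorem heine_defining_system (m n : ℕ) (hm : 0 < m) (hmn : m ≤ n)
    (A : Matrix (Fin m) (Fin n) ℂ)
    (hupper : ∀ (i : Fin m) (j : Fin n), (j : ℕ) < (i : ℕ) → A i j = 0)
    (hdiag : Function.Injective fun i : Fin m => A i (Fin.castLE hmn i))
    -- `a p q` is the `(p,q)` entry of `A` in 1-based indexing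
    (a : ℕ → ℕ → ℂ)
    (ha : ∀ (p q : ℕ) (hp : p - 1 < m) (hq : q - 1 < n), a p q = A ⟨p - 1, hp⟩ ⟨q - 1, hq⟩)
    -- `lam t` is `λ_t` in 1-based indexing, with the convention `λ_t = 0` out of range
    (lam : ℕ → ℂ) (hlam0 : lam 0 = 0) (hlam1 : lam 1 = -a 1 1)
    (hlam_high : ∀ t, n - m + 1 < t → lam t = 0)
    -- the recursively defined kernel coordinates
    (k : ℕ → ℂ) (hk1 : k 1 = 1)
    (hk : ∀ i, 2 ≤ i → i ≤ m →
      k i = (a 1 1 - a i i)⁻¹ *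
        ∑ j ∈ Finset.Icc 1 (i - 1), k j * (a j i + lam (i - j + 1))) :
    (A + ∑ s : Fin (n - m + 1), lam ((s : ℕ) + 1) • J m n s).rank < m ↔
      ∀ l, m + 1 ≤ l → l ≤ n →
        ∑ j ∈ Finset.Icc 1 m, k j * (a j l + lam (l - j + 1)) = 0 := by
  set B := A + ∑ s : Fin (n - m + 1), lam ((s : ℕ) + 1) • J m n s with hBdef
  -- entries of the J-sum
  have hJsum : ∀ (i : Fin m) (j : Fin n),
      (∑ s : Fin (n - m + 1), lam ((s : ℕ) + 1) • J m n s) i j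
        = if (i : ℕ) ≤ (j : ℕ) then lam ((j : ℕ) - (i : ℕ) + 1) else 0 := by
    intro i j
    rw [Matrix.sum_apply]
    simp only [Matrix.smul_apply, J, Matrix.of_apply, smul_eq_mul, mul_ite, mul_one, mul_zero]
    by_cases hij : (i : ℕ) ≤ (j : ℕ)
    · rw [if_pos hij]
      by_cases hrange : (j : ℕ) - (i : ℕ) < n - m + 1
      · rw [Finset.sum_eq_single (⟨(j : ℕ) - (i : ℕ), hrange⟩ : Fin (n - m + 1))]
        · simp only [Fin.val_mk]
          rw [if_pos (by omega : (j : ℕ) = (i : ℕ) + ((j : ℕ) - (i : ℕ)))]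
        · intro s _ hs
          rw [if_neg]
          intro hcon
          exact hs (by apply Fin.ext; simp only [Fin.val_mk]; omega)
        · intro hcon
          exact absurd (Finset.mem_univ _) hcon
      · rw [hlam_high _ (by omega)]
        apply Finset.sum_eq_zero
        intro s _
        rw [if_neg]
        omega
    · rw [if_neg hij]
      apply Finset.sum_eq_zero
      intro s _
      rw [if_neg]
      omega
  -- entry formulas for B
  have hBz : ∀ (i : Fin m) (j : Fin n), (j : ℕ) < (i : ℕ) → B i j = 0 := by
    intro i j hij
    rw [hBdef, Matrix.add_apply, hJsum, if_neg (by omega), hupper i j hij, add_zero]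
  have hBe : ∀ (i : Fin m) (j : Fin n), (i : ℕ) ≤ (j : ℕ) →
      B i j = a ((i : ℕ) + 1) ((j : ℕ) + 1) + lam ((j : ℕ) - (i : ℕ) + 1) := by
    intro i j hij
    rw [hBdef, Matrix.add_apply, hJsum, if_pos hij,
      ha ((i : ℕ) + 1) ((j : ℕ) + 1) (by omega) (by omega)]
    congr 2 <;> · apply Fin.ext; simp
  -- diagonal values
  have haA : ∀ i : Fin m, a ((i : ℕ) + 1) ((i : ℕ) + 1) = A i (Fin.castLE hmn i) := by
    intro i
    rw [ha ((i : ℕ) + 1) ((i : ℕ) + 1) (by omega) (by omega)]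
    congr 1 <;> · apply Fin.ext; simp
  have ha11 : a 1 1 = A ⟨0, hm⟩ (Fin.castLE hmn ⟨0, hm⟩) := by
    rw [ha 1 1 (by omega) (by omega)]
    congr 1 <;> · apply Fin.ext; simp
  have hDne : ∀ i : Fin m, (i : ℕ) ≠ 0 →
      a ((i : ℕ) + 1) ((i : ℕ) + 1) - a 1 1 ≠ 0 := by
    intro i hi
    rw [haA, ha11, sub_ne_zero]
    intro hcon
    exact hi (congrArg Fin.val (hdiag hcon) : ((i : ℕ) = 0))
  have hBdiag : ∀ i : Fin m,
      B i (Fin.castLE hmn i) = a ((i : ℕ) + 1) ((i : ℕ) + 1) - a 1 1 := by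
    intro i
    rw [hBe i (Fin.castLE hmn i) (le_refl _)]
    simp only [Fin.coe_castLE, Nat.sub_self, zero_add, hlam1]
    ring
  -- the key column-sum identity for the vector k
  have key : ∀ j : Fin n,
      ∑ i : Fin m, k ((i : ℕ) + 1) * B i j
        = ∑ p ∈ Finset.Icc 1 (min ((j : ℕ) + 1) m),
            k p * (a p ((j : ℕ) + 1) + lam ((j : ℕ) + 1 - p + 1)) := by
    intro j
    set M := min ((j : ℕ) + 1) m with hM
    have hMm : M ≤ m := min_le_right _ _
    -- rewrite the Fin sum as a range sum of a ℕ-indexed function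
    set f : ℕ → ℂ := fun q => if h : q < m then k (q + 1) * B ⟨q, h⟩ j else 0 with hf
    have h1 : ∑ i : Fin m, k ((i : ℕ) + 1) * B i j = ∑ q ∈ Finset.range m, f q := by
      rw [← Fin.sum_univ_eq_sum_range]
      apply Finset.sum_congr rfl
      intro i _
      simp only [hf, dif_pos i.isLt]
    have h2 : ∑ q ∈ Finset.range m, f q = ∑ q ∈ Finset.range M, f q := by
      symm
      apply Finset.sum_subset (Finset.range_subset_range.2 hMm)
      intro q hq hq'
      simp only [Finset.mem_range] at hq hq'
      simp only [hf, dif_pos hq]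
      rw [hBz ⟨q, hq⟩ j (by simp only [Fin.val_mk]; omega), mul_zero]
    rw [h1, h2, sum_Icc_one_eq_range]
    apply Finset.sum_congr rfl
    intro q hq
    simp only [Finset.mem_range] at hq
    have hqm : q < m := lt_of_lt_of_le hq hMm
    have hqj : q ≤ (j : ℕ) := by omega
    simp only [hf, dif_pos hqm]
    rw [hBe ⟨q, hqm⟩ j hqj]
    simp only [Fin.val_mk]
    rw [show (j : ℕ) + 1 - (q + 1) + 1 = (j : ℕ) - q + 1 from by omega]
  -- the first m columns vanish against k
  have hSzero : ∀ j : Fin n, (j : ℕ) < m → ∑ i : Fin m, k ((i : ℕ) + 1) * B i j = 0 := by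
    intro j hj
    rw [key j]
    have hMeq : min ((j : ℕ) + 1) m = (j : ℕ) + 1 := by omega
    rw [hMeq]
    by_cases hj0 : (j : ℕ) = 0
    · rw [hj0]
      simp only [Finset.Icc_self, Finset.sum_singleton]
      rw [hk1, hlam1]
      ring
    · have h2 : 2 ≤ (j : ℕ) + 1 := by omega
      rw [Finset.sum_Icc_succ_top (by omega : 1 ≤ (j : ℕ) + 1)]
      have hrec := hk ((j : ℕ) + 1) h2 (by omega)
      have hIcc : (j : ℕ) + 1 - 1 = (j : ℕ) := by omega
      rw [hIcc] at hrec
      have hD : a ((j : ℕ) + 1) ((j : ℕ) + 1) - a 1 1 ≠ 0 := by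
        have hjm : (j : ℕ) < m := hj
        have := hDne ⟨(j : ℕ), hjm⟩ (by simpa using hj0)
        simpa using this
      have hlamtop : (j : ℕ) + 1 - ((j : ℕ) + 1) + 1 = 1 := by omega
      rw [hlamtop, hlam1, hrec]
      have hD' : a 1 1 - a ((j : ℕ) + 1) ((j : ℕ) + 1) ≠ 0 := by
        intro h
        apply hD
        rw [sub_eq_zero] at h ⊢
        exact h.symm
      have hcancel : (a 1 1 - a ((j : ℕ) + 1) ((j : ℕ) + 1))⁻¹
          * (a 1 1 - a ((j : ℕ) + 1) ((j : ℕ) + 1)) = 1 := inv_mul_cancel₀ hD'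
      linear_combination (-(∑ p ∈ Finset.Icc 1 (j : ℕ),
        k p * (a p ((j : ℕ) + 1) + lam ((j : ℕ) + 1 - p + 1)))) * hcancel
  -- tail columns give the stated equations
  have hStail : ∀ j : Fin n, m ≤ (j : ℕ) →
      ∑ i : Fin m, k ((i : ℕ) + 1) * B i j
        = ∑ p ∈ Finset.Icc 1 m, k p * (a p ((j : ℕ) + 1) + lam ((j : ℕ) + 1 - p + 1)) := by
    intro j hj
    rw [key j]
    have : min ((j : ℕ) + 1) m = m := by omega
    rw [this]
  -- rank characterization
  have hrank : B.rank < m ↔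
      ∃ c : Fin m → ℂ, (∀ j : Fin n, ∑ i : Fin m, c i * B i j = 0) ∧ ∃ i, c i ≠ 0 := by
    have h1 : B.rank ≤ m := by
      simpa using B.rank_le_height
    have h3 : B.rank = Set.finrank ℂ (Set.range B) := by
      rw [Matrix.rank_eq_finrank_span_row]; rfl
    have h4 : LinearIndependent ℂ B ↔ Fintype.card (Fin m) = Set.finrank ℂ (Set.range B) :=
      linearIndependent_iff_card_eq_finrank_span
    have h5 : B.rank < m ↔ ¬ LinearIndependent ℂ B := by
      rw [h4, ← h3, Fintype.card_fin]
      omega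
    rw [h5]
    refine Fintype.not_linearIndependent_iff.trans ?_
    constructor
    · rintro ⟨g, hg, i, hi⟩
      refine ⟨g, fun j => ?_, i, hi⟩
      have := congrFun hg j
      simpa [Finset.sum_apply, smul_eq_mul] using this
    · rintro ⟨c, hc, i, hi⟩
      refine ⟨c, ?_, i, hi⟩
      funext j
      simpa [Finset.sum_apply, smul_eq_mul] using hc j
  rw [hrank]
  constructor
  · -- rank < m ⇒ equations
    rintro ⟨c, hc, i0, hi0⟩
    -- first: c 0 ≠ 0
    have hc0 : c ⟨0, hm⟩ ≠ 0 := by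
      intro hc0
      have hall : ∀ q : ℕ, ∀ i : Fin m, (i : ℕ) = q → c i = 0 := by
        intro q
        induction q using Nat.strong_induction_on with
        | _ q IH =>
          intro i hi
          rcases Nat.eq_zero_or_pos q with hq0 | hq0
          · have : i = ⟨0, hm⟩ := by apply Fin.ext; simp only [Fin.val_mk]; omega
            rw [this]; exact hc0
          · have hcol := hc (Fin.castLE hmn i)
            have hsingle : ∑ p : Fin m, c p * B p (Fin.castLE hmn i)
                = c i * B i (Fin.castLE hmn i) := by
              apply Finset.sum_eq_single i
              · intro p _ hpi
                rcases lt_or_gt_of_ne (fun h => hpi (Fin.ext h) : (p : ℕ) ≠ (i : ℕ)) with h | h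
                · rw [IH (p : ℕ) (by omega) p rfl, zero_mul]
                · rw [hBz p (Fin.castLE hmn i) (by simpa using h), mul_zero]
              · intro hcon; exact absurd (Finset.mem_univ _) hcon
            rw [hsingle] at hcol
            rw [hBdiag i] at hcol
            have := hDne i (by omega)
            rcases mul_eq_zero.mp hcol with h | h
            · exact h
            · exact absurd h this
      exact hi0 (hall (i0 : ℕ) i0 rfl)
    -- normalize
    set d : Fin m → ℂ := fun i => (c ⟨0, hm⟩)⁻¹ * c i with hd
    have hdc : ∀ j : Fin n, ∑ i : Fin m, d i * B i j = 0 := by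
      intro j
      simp only [hd, mul_assoc, ← Finset.mul_sum]
      rw [hc j, mul_zero]
    have hd0 : d ⟨0, hm⟩ = 1 := by
      simp only [hd]
      exact inv_mul_cancel₀ hc0
    -- show d i = k (i+1)
    have hdk : ∀ q : ℕ, ∀ i : Fin m, (i : ℕ) = q → d i = k ((i : ℕ) + 1) := by
      intro q
      induction q using Nat.strong_induction_on with
      | _ q IH =>
        intro i hi
        rcases Nat.eq_zero_or_pos q with hq0 | hq0
        · have hieq : i = ⟨0, hm⟩ := by apply Fin.ext; simp only [Fin.val_mk]; omega
          rw [hieq, hd0]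
          have : ((⟨0, hm⟩ : Fin m) : ℕ) + 1 = 1 := by simp
          rw [this, hk1]
        · -- subtract the k-relation from the d-relation on column i
          have hcol := hdc (Fin.castLE hmn i)
          have hkcol := hSzero (Fin.castLE hmn i) (by simp)
          have hdiff : ∑ p : Fin m, (d p - k ((p : ℕ) + 1)) * B p (Fin.castLE hmn i) = 0 := by
            have : ∑ p : Fin m, (d p - k ((p : ℕ) + 1)) * B p (Fin.castLE hmn i)
                = ∑ p : Fin m, d p * B p (Fin.castLE hmn i)
                  - ∑ p : Fin m, k ((p : ℕ) + 1) * B p (Fin.castLE hmn i) := by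
              rw [← Finset.sum_sub_distrib]
              apply Finset.sum_congr rfl
              intro p _
              ring
            rw [this, hcol, hkcol, sub_zero]
          have hsingle : ∑ p : Fin m, (d p - k ((p : ℕ) + 1)) * B p (Fin.castLE hmn i)
              = (d i - k ((i : ℕ) + 1)) * B i (Fin.castLE hmn i) := by
            apply Finset.sum_eq_single i
            · intro p _ hpi
              rcases lt_or_gt_of_ne (fun h => hpi (Fin.ext h) : (p : ℕ) ≠ (i : ℕ)) with h | h
              · rw [IH (p : ℕ) (by omega) p rfl, sub_self, zero_mul]
              · rw [hBz p (Fin.castLE hmn i) (by simpa using h), mul_zero]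
            · intro hcon; exact absurd (Finset.mem_univ _) hcon
          rw [hsingle, hBdiag i] at hdiff
          have hne := hDne i (by omega)
          rcases mul_eq_zero.mp hdiff with h | h
          · exact sub_eq_zero.mp h
          · exact absurd h hne
    -- conclude the equations
    intro l hl1 hl2
    have hjlt : l - 1 < n := by omega
    set j : Fin n := ⟨l - 1, hjlt⟩ with hj
    have hjm : m ≤ (j : ℕ) := by simp [hj]; omega
    have hcolj := hdc j
    have hceq : ∀ i : Fin m, d i = k ((i : ℕ) + 1) := fun i => hdk (i : ℕ) i rfl
    have : ∑ i : Fin m, k ((i : ℕ) + 1) * B i j = 0 := by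
      rw [← hcolj]
      apply Finset.sum_congr rfl
      intro i _
      rw [hceq i]
    rw [hStail j hjm] at this
    have hl : (j : ℕ) + 1 = l := by simp [hj]; omega
    rw [hl] at this
    exact this
  · -- equations ⇒ rank < m
    intro heq
    refine ⟨fun i => k ((i : ℕ) + 1), fun j => ?_, ⟨0, hm⟩, ?_⟩
    · by_cases hj : (j : ℕ) < m
      · exact hSzero j hj
      · rw [hStail j (by omega)]
        exact heq ((j : ℕ) + 1) (by omega) (by omega)
    · simp only []
      rw [(by simp : ((⟨0, hm⟩ : Fin m) : ℕ) + 1 = 1), hk1]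
      exact one_ne_zero
end

section
/- Let i, d be positive integers. The binomial(i+d−1, d) polynomials in the variables k_1, …, k_i given by the maximal minors det(T_{i,d}[{1,…,d}|β]), where β ranges over Q_{d,i+d−1}, form a basis of the complex vector space HP(i,d) of homogeneous polynomials of degree d in i variables. -/
/-- `T i d` : the `d × (i+d-1)` matrix over `ℂ[k₁,…,k_i]` whose `(r,c)` entry
(0-indexed) is the variable `k_{c-r}` if `r ≤ c` and `c - r < i`, and `0` otherwise;
i.e. `T_{i,d}(k₁,…,k_i) = k₁J₁ + ⋯ + k_iJ_i`. -/
noncomputable def T (i d : ℕ) : Matrix (Fin d) (Fin (i + d - 1)) (MvPolynomial (Fin i) ℂ) :=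
  Matrix.of fun r c =>
    if h : (r : ℕ) ≤ (c : ℕ) ∧ (c : ℕ) - (r : ℕ) < i then
      MvPolynomial.X ⟨(c : ℕ) - (r : ℕ), h.2⟩
    else 0

namespace Lemma4Aux
open MvPolynomial Finset

variable {i d : ℕ}

/-- gap lemma for strictly monotone `ℕ`-valued tuples -/
lemma sm_gap {n : ℕ} {g : Fin n → ℕ} (hg : StrictMono g) (x y : Fin n)
    (h : (x : ℕ) ≤ y) : g x + ((y : ℕ) - (x : ℕ)) ≤ g y := by
  obtain ⟨k, hk⟩ := Nat.exists_eq_add_of_le h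
  induction k generalizing y with
  | zero => have : x = y := Fin.ext (by omega); subst this; simp
  | succ k ih =>
      have hxk : (x : ℕ) + k < n := by have := y.isLt; omega
      have h1 : g x + k ≤ g ⟨(x : ℕ) + k, hxk⟩ := by
        have := ih ⟨(x : ℕ) + k, hxk⟩ (by simp) (by simp)
        simpa using this
      have h2 : g ⟨(x : ℕ) + k, hxk⟩ < g y := hg (by simp [Fin.lt_def]; omega)
      omega

abbrev QQ (i d : ℕ) := {t : Finset (Fin (i + d - 1)) // t.card = d}

noncomputable def fB (β : QQ i d) : Fin d → Fin (i + d - 1) :=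
  fun x => (β.1.orderIsoOfFin β.2 x : Fin (i + d - 1))

lemma fB_strictMono (β : QQ i d) : StrictMono (fB β) :=
  (β.1.orderEmbOfFin β.2).strictMono

lemma fB_mem (β : QQ i d) (x : Fin d) : fB β x ∈ β.1 := (β.1.orderIsoOfFin β.2 x).2

lemma fB_val_strictMono (β : QQ i d) : StrictMono fun x => ((fB β x : ℕ)) :=
  fun _ _ h => fB_strictMono β h

lemma le_fB (β : QQ i d) (x : Fin d) : (x : ℕ) ≤ fB β x := by
  have := sm_gap (fB_val_strictMono β) ⟨0, x.pos⟩ x (by simp)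
  simp only [Fin.val_mk] at this
  omega

lemma i_pos (β : QQ i d) (hd : 0 < d) : 0 < i := by
  have h1 : β.1.card ≤ Fintype.card (Fin (i + d - 1)) := Finset.card_le_univ β.1 |>.trans (by simp)
  rw [β.2, Fintype.card_fin] at h1
  omega

lemma fB_sub_lt (β : QQ i d) (x : Fin d) : (fB β x : ℕ) - (x : ℕ) < i := by
  have hx : (x : ℕ) < d := x.isLt
  have hi : 0 < i := i_pos β x.pos
  have hlast : ((d : ℕ) - 1) < d := by omega
  have h1 : (fB β x : ℕ) + ((d - 1) - (x : ℕ)) ≤ (fB β ⟨d - 1, hlast⟩ : ℕ) :=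
    sm_gap (fB_val_strictMono β) x ⟨d - 1, hlast⟩ (by simp [Fin.le_def]; omega)
  have h2 : (fB β ⟨d - 1, hlast⟩ : ℕ) < i + d - 1 := (fB β ⟨d - 1, hlast⟩).isLt
  omega

/-- the `x`-th entry (0-indexed) of the nondecreasing rearrangement -/
noncomputable def bB (β : QQ i d) (x : Fin d) : Fin i := ⟨(fB β x : ℕ) - (x : ℕ), fB_sub_lt β x⟩

lemma bB_monotone (β : QQ i d) : Monotone (bB β) := by
  intro x y h
  have := sm_gap (fB_val_strictMono β) x y h
  simp [bB, Fin.le_def]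
  omega

/-- the exponent vector (monomial) associated to `β` -/
noncomputable def mB (β : QQ i d) : Fin i →₀ ℕ := ∑ x : Fin d, Finsupp.single (bB β x) 1


/-! ### monomial machinery -/

lemma prod_X_eq_aux (s : Finset (Fin d)) (c : Fin d → Fin i) :
    (∏ x ∈ s, (X (c x) : MvPolynomial (Fin i) ℂ)) =
      monomial (∑ x ∈ s, Finsupp.single (c x) 1) 1 := by
  classical
  induction s using Finset.induction with
  | empty => simp
  | insert _ _ hx ih =>
      rw [Finset.prod_insert hx, Finset.sum_insert hx, ih, X, monomial_mul, one_mul]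

lemma prod_X_eq (c : Fin d → Fin i) :
    (∏ x : Fin d, (X (c x) : MvPolynomial (Fin i) ℂ)) =
      monomial (∑ x : Fin d, Finsupp.single (c x) 1) 1 :=
  prod_X_eq_aux Finset.univ c

lemma toMultiset_sum_single (c : Fin d → Fin i) :
    Finsupp.toMultiset (∑ x : Fin d, Finsupp.single (c x) 1) = ↑(List.ofFn c) := by
  rw [map_sum]
  simp only [Finsupp.toMultiset_single, one_smul]
  rw [Finset.sum_eq_multiset_sum]
  rw [← Fin.univ_val_map (fun x => c x),
    show (fun x => ({c x} : Multiset (Fin i))) = (fun a => ({a} : Multiset (Fin i))) ∘ c from rfl,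
    ← Multiset.map_map, Multiset.sum_map_singleton]

lemma degree_sum_single (c : Fin d → Fin i) :
    Finsupp.degree (∑ x : Fin d, Finsupp.single (c x) 1) = d := by
  have h : (Finsupp.toMultiset (∑ x : Fin d, Finsupp.single (c x) 1)).card = d := by
    rw [toMultiset_sum_single]; simp
  rw [Finsupp.card_toMultiset] at h
  rw [Finsupp.degree_apply]
  simpa [Finsupp.sum] using h

/-- the "spread" statistic: `∑ j² mⱼ` -/
def Sv (m : Fin i →₀ ℕ) : ℕ := ∑ j : Fin i, (j : ℕ)^2 * m j

lemma Sv_sum_single (c : Fin d → Fin i) :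
    Sv (∑ x : Fin d, Finsupp.single (c x) 1) = ∑ x : Fin d, ((c x : ℕ))^2 := by
  classical
  unfold Sv
  simp only [Finsupp.finset_sum_apply, Finsupp.single_apply, Finset.mul_sum]
  rw [Finset.sum_comm]
  refine Finset.sum_congr rfl fun x _ => ?_
  simp [Finset.sum_ite_eq' Finset.univ (c x) (fun j => (j:ℕ)^2 * 1)]


/-! ### injectivity and surjectivity of `mB` -/

lemma card_toMultiset_eq_degree {α : Type*} (a : α →₀ ℕ) :
    (Finsupp.toMultiset a).card = Finsupp.degree a := by
  rw [Finsupp.card_toMultiset, Finsupp.degree_apply]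
  simp [Finsupp.sum]

lemma mB_toMultiset (β : QQ i d) : Finsupp.toMultiset (mB β) = ↑(List.ofFn (bB β)) :=
  toMultiset_sum_single _

lemma ofFn_bB_sorted (β : QQ i d) : (List.ofFn (bB β)).Pairwise (· ≤ ·) :=
  List.pairwise_ofFn.2 fun _ _ h => bB_monotone β h.le

lemma finset_eq_image (δ : QQ i d) : δ.1 = Finset.image (fun x => fB δ x) Finset.univ := by
  refine (Finset.eq_of_subset_of_card_le (fun y hy => ?_) ?_).symm
  · obtain ⟨x, _, rfl⟩ := Finset.mem_image.1 hy
    exact fB_mem δ x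
  · rw [Finset.card_image_of_injective _ (fB_strictMono δ).injective, δ.2]
    simp

lemma mB_inj : Function.Injective (mB (i := i) (d := d)) := by
  intro β γ h
  have hm : (↑(List.ofFn (bB β)) : Multiset (Fin i)) = ↑(List.ofFn (bB γ)) := by
    rw [← mB_toMultiset, ← mB_toMultiset, h]
  have hl : List.ofFn (bB β) = List.ofFn (bB γ) :=
    List.Perm.eq_of_pairwise' (ofFn_bB_sorted β) (ofFn_bB_sorted γ) (Multiset.coe_eq_coe.1 hm)
  have hb : bB β = bB γ := List.ofFn_inj.1 hl
  have hf : fB β = fB γ := by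
    funext x
    have h1 := le_fB β x
    have h2 := le_fB γ x
    have h3 : (bB β x : ℕ) = (bB γ x : ℕ) := by rw [hb]
    apply Fin.ext
    simp only [bB] at h3
    omega
  apply Subtype.ext
  rw [finset_eq_image β, finset_eq_image γ, hf]

lemma exists_mB (hd : 0 < d) (a : Fin i →₀ ℕ) (ha : Finsupp.degree a = d) :
    ∃ β : QQ i d, mB β = a := by
  classical
  have hcard : (Finsupp.toMultiset a).card = d := by rw [card_toMultiset_eq_degree, ha]
  set l := (Finsupp.toMultiset a).sort (· ≤ ·) with hldef
  have hlen : l.length = d := by rw [hldef, Multiset.length_sort, hcard]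
  have hsort : l.Pairwise (· ≤ ·) := Multiset.pairwise_sort _ _
  have hi : 0 < i := (l.get (Fin.cast hlen.symm ⟨0, hd⟩)).pos
  have hbound : ∀ x : Fin d, (l.get (Fin.cast hlen.symm x) : ℕ) + (x : ℕ) < i + d - 1 := by
    intro x
    have := (l.get (Fin.cast hlen.symm x)).isLt
    have := x.isLt
    omega
  set g : Fin d → Fin (i + d - 1) := fun x => ⟨(l.get (Fin.cast hlen.symm x) : ℕ) + x, hbound x⟩
    with hgdef
  have hg : StrictMono g := by
    intro x y hxy
    have h1 : (l.get (Fin.cast hlen.symm x) : ℕ) ≤ (l.get (Fin.cast hlen.symm y) : ℕ) :=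
      hsort.rel_get_of_le (show Fin.cast hlen.symm x ≤ Fin.cast hlen.symm y from
        by rw [Fin.le_def]; exact Fin.le_def.mp hxy.le)
    have h2 : (x : ℕ) < (y : ℕ) := hxy
    show ((⟨(l.get (Fin.cast hlen.symm x) : ℕ) + x, hbound x⟩ : Fin (i + d - 1))) <
      ⟨(l.get (Fin.cast hlen.symm y) : ℕ) + y, hbound y⟩
    rw [Fin.mk_lt_mk]
    omega
  have hcardt : (Finset.image g Finset.univ).card = d := by
    rw [Finset.card_image_of_injective _ hg.injective]
    simp
  refine ⟨⟨Finset.image g Finset.univ, hcardt⟩, ?_⟩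
  have hfg : fB ⟨Finset.image g Finset.univ, hcardt⟩ = g := by
    have := Finset.orderEmbOfFin_unique hcardt
      (f := g) (fun x => Finset.mem_image_of_mem g (Finset.mem_univ x)) hg
    funext x
    rw [fB, Finset.coe_orderIsoOfFin_apply, ← this]
  have hinj : Function.Injective (Finsupp.toMultiset : (Fin i →₀ ℕ) → Multiset (Fin i)) := by
    intro u v huv
    have h5 := congrArg Multiset.toFinsupp huv
    rwa [Finsupp.toMultiset_toFinsupp, Finsupp.toMultiset_toFinsupp] at h5
  apply hinj
  rw [mB_toMultiset]
  have hofn : List.ofFn (bB ⟨Finset.image g Finset.univ, hcardt⟩) = l := by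
    apply List.ext_get (by simp [hlen])
    intro n h1 h2
    rw [List.get_ofFn]
    apply Fin.ext
    simp only [bB, hfg]
    simp [hgdef]
  rw [hofn, hldef, Multiset.sort_eq]


/-! ### the determinant and its terms -/

lemma perm_eq_one_of_le {n : ℕ} (σ : Equiv.Perm (Fin n))
    (h : ∀ x y : Fin n, σ x < σ y → x ≤ y) : σ = 1 := by
  have hτ : StrictMono (⇑σ⁻¹) := by
    intro u v huv
    have h1 : σ⁻¹ u ≤ σ⁻¹ v := by
      apply h
      simpa using huv
    rcases lt_or_eq_of_le h1 with h2 | h2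
    · exact h2
    · exfalso
      have := congrArg σ h2
      simp at this
      omega
  have hσm : StrictMono (⇑σ) := by
    intro u v huv
    rcases lt_trichotomy (σ u) (σ v) with h2 | h2 | h2
    · exact h2
    · exact absurd (σ.injective h2) (ne_of_lt huv)
    · have := hτ h2
      simp at this
      exact absurd huv (not_lt_of_gt (by omega))
  have h1 : ∀ u : Fin n, (u : ℕ) ≤ ((σ u : ℕ)) := by
    intro u
    have := sm_gap (g := fun x => ((σ x : ℕ))) (fun _ _ h => hσm h) ⟨0, u.pos⟩ u (by simp)
    simp only [Fin.val_mk] at this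
    omega
  have h2 : ∀ u : Fin n, (u : ℕ) ≤ ((σ⁻¹ u : ℕ)) := by
    intro u
    have := sm_gap (g := fun x => ((σ⁻¹ x : ℕ))) (fun _ _ h => hτ h) ⟨0, u.pos⟩ u (by simp)
    simp only [Fin.val_mk] at this
    omega
  ext u
  have h3 := h1 u
  have h4 := h2 (σ u)
  simp only [Equiv.Perm.inv_def, Equiv.symm_apply_apply] at h4
  simp only [Equiv.Perm.coe_one, id_eq]
  omega

lemma strict_rearrange (β : QQ i d) (σ : Equiv.Perm (Fin d)) (hσ : σ ≠ 1) :
    ∑ x : Fin d, ((fB β x : ℕ) : ℤ) * ((σ x : ℕ) : ℤ) <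
      ∑ x : Fin d, ((fB β x : ℕ) : ℤ) * ((x : ℕ) : ℤ) := by
  have hmono : Monovary (fun x : Fin d => ((fB β x : ℕ) : ℤ))
      (fun x : Fin d => ((x : ℕ) : ℤ)) := by
    intro x y h
    have h' : ((x : ℕ) : ℤ) < ((y : ℕ) : ℤ) := h
    have hxy : x < y := by
      rw [Fin.lt_def]
      exact_mod_cast h'
    show ((fB β x : ℕ) : ℤ) ≤ ((fB β y : ℕ) : ℤ)
    exact_mod_cast (fB_strictMono β hxy).le
  refine (Monovary.sum_mul_comp_perm_lt_sum_mul_iff hmono).2 ?_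
  intro hM
  apply hσ
  apply perm_eq_one_of_le
  intro x y hxy
  have h1 : ((fB β x : ℕ) : ℤ) ≤ ((fB β y : ℕ) : ℤ) := by
    apply hM
    show ((σ x : ℕ) : ℤ) < ((σ y : ℕ) : ℤ)
    exact_mod_cast hxy
  by_contra hc
  push_neg at hc
  exact absurd (by exact_mod_cast h1) (not_le_of_gt (fB_strictMono β hc))

lemma key_ineq (β : QQ i d) (σ : Equiv.Perm (Fin d)) (hσ : σ ≠ 1)
    (hval : ∀ x : Fin d, (σ x : ℕ) ≤ (fB β x : ℕ)) :
    ∑ x : Fin d, ((bB β x : ℕ))^2 < ∑ x : Fin d, ((fB β x : ℕ) - (σ x : ℕ))^2 := by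
  have expand : ∀ s : Fin d → ℤ,
      ∑ x : Fin d, (((fB β x : ℕ) : ℤ) - s x)^2 =
        (∑ x : Fin d, ((fB β x : ℕ) : ℤ)^2 + ∑ x : Fin d, (s x)^2) -
          2 * ∑ x : Fin d, ((fB β x : ℕ) : ℤ) * s x := by
    intro s
    rw [Finset.mul_sum, ← Finset.sum_add_distrib, ← Finset.sum_sub_distrib]
    exact Finset.sum_congr rfl fun x _ => by ring
  have hsq : ∑ x : Fin d, ((σ x : ℕ) : ℤ)^2 = ∑ x : Fin d, ((x : ℕ) : ℤ)^2 :=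
    Equiv.sum_comp σ (fun y : Fin d => ((y : ℕ) : ℤ)^2)
  have hre := strict_rearrange β σ hσ
  have main : (∑ x : Fin d, (((fB β x : ℕ) : ℤ) - ((x : ℕ) : ℤ))^2) <
      ∑ x : Fin d, (((fB β x : ℕ) : ℤ) - ((σ x : ℕ) : ℤ))^2 := by
    rw [expand (fun x => ((x : ℕ) : ℤ)), expand (fun x => ((σ x : ℕ) : ℤ)), hsq]
    linarith
  have hL : ((∑ x : Fin d, ((bB β x : ℕ))^2 : ℕ) : ℤ) =
      ∑ x : Fin d, (((fB β x : ℕ) : ℤ) - ((x : ℕ) : ℤ))^2 := by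
    push_cast
    refine Finset.sum_congr rfl fun x _ => ?_
    have h1 := le_fB β x
    have : ((bB β x : ℕ) : ℤ) = ((fB β x : ℕ) : ℤ) - ((x : ℕ) : ℤ) := by
      simp only [bB]
      omega
    rw [this]
  have hR : ((∑ x : Fin d, ((fB β x : ℕ) - (σ x : ℕ))^2 : ℕ) : ℤ) =
      ∑ x : Fin d, (((fB β x : ℕ) : ℤ) - ((σ x : ℕ) : ℤ))^2 := by
    push_cast
    refine Finset.sum_congr rfl fun x _ => ?_
    have h1 := hval x
    have : (((fB β x : ℕ) - (σ x : ℕ) : ℕ) : ℤ) = ((fB β x : ℕ) : ℤ) - ((σ x : ℕ) : ℤ) := by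
      omega
    rw [this]
  have : ((∑ x : Fin d, ((bB β x : ℕ))^2 : ℕ) : ℤ) <
      ((∑ x : Fin d, ((fB β x : ℕ) - (σ x : ℕ))^2 : ℕ) : ℤ) := by
    rw [hL, hR]; exact main
  exact_mod_cast this

noncomputable def pB (β : QQ i d) : MvPolynomial (Fin i) ℂ :=
  ((T i d).submatrix id (fB β)).det

noncomputable def termB (β : QQ i d) (σ : Equiv.Perm (Fin d)) : MvPolynomial (Fin i) ℂ :=
  ∏ x : Fin d, T i d (σ x) (fB β x)

lemma pB_eq (β : QQ i d) :
    pB β = ∑ σ : Equiv.Perm (Fin d),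
      ((Equiv.Perm.sign σ : ℤ) • termB β σ) := by
  rw [pB, Matrix.det_apply]
  refine Finset.sum_congr rfl fun σ _ => ?_
  rw [Units.smul_def, termB]
  rfl

lemma termB_id (β : QQ i d) : termB β 1 = monomial (mB β) 1 := by
  rw [termB, mB]
  rw [show (∏ x : Fin d, T i d ((1 : Equiv.Perm (Fin d)) x) (fB β x)) =
      ∏ x : Fin d, (X (bB β x) : MvPolynomial (Fin i) ℂ) from
    Finset.prod_congr rfl fun x _ => ?_]
  · exact prod_X_eq _
  · show T i d x (fB β x) = X (bB β x)
    rw [T]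
    simp only [Matrix.of_apply]
    rw [dif_pos ⟨le_fB β x, fB_sub_lt β x⟩]
    rfl

lemma termB_ne (β : QQ i d) (σ : Equiv.Perm (Fin d)) (hσ : σ ≠ 1) :
    termB β σ = 0 ∨ ∃ N : Fin i →₀ ℕ,
      termB β σ = monomial N 1 ∧ Finsupp.degree N = d ∧ Sv (mB β) < Sv N := by
  classical
  by_cases hval : ∀ x : Fin d, ((σ x : ℕ) ≤ (fB β x : ℕ) ∧ (fB β x : ℕ) - (σ x : ℕ) < i)
  · right
    refine ⟨∑ x : Fin d, Finsupp.single (⟨(fB β x : ℕ) - (σ x : ℕ), (hval x).2⟩ : Fin i) 1,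
      ?_, degree_sum_single _, ?_⟩
    · rw [termB, ← prod_X_eq (fun x => (⟨(fB β x : ℕ) - (σ x : ℕ), (hval x).2⟩ : Fin i))]
      refine Finset.prod_congr rfl fun x _ => ?_
      rw [T]
      simp only [Matrix.of_apply]
      rw [dif_pos (hval x)]
    · rw [Sv_sum_single, mB, Sv_sum_single]
      exact key_ineq β σ hσ fun x => (hval x).1
  · left
    push_neg at hval
    obtain ⟨x, hx⟩ := hval
    rw [termB]
    apply Finset.prod_eq_zero (Finset.mem_univ x)
    rw [T]
    simp only [Matrix.of_apply]
    rw [dif_neg]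
    rintro ⟨h1, h2⟩
    have := hx h1
    omega


/-! ### coefficient lemmas -/

lemma degree_mB (β : QQ i d) : Finsupp.degree (mB β) = d := by
  rw [mB]; exact degree_sum_single _

lemma coeff_pB_self (β : QQ i d) : coeff (mB β) (pB β) = 1 := by
  classical
  rw [pB_eq, coeff_sum]
  rw [Finset.sum_eq_single (1 : Equiv.Perm (Fin d))]
  · rw [coeff_smul, termB_id, coeff_monomial, if_pos rfl]
    simp
  · intro σ _ hσ
    rw [coeff_smul]
    rcases termB_ne β σ hσ with h0 | ⟨N, hN, _, hS⟩
    · rw [h0, coeff_zero, smul_zero]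
    · rw [hN, coeff_monomial, if_neg, smul_zero]
      intro h
      rw [h] at hS
      exact lt_irrefl _ hS
  · intro h
    exact absurd (Finset.mem_univ 1) h

lemma coeff_pB_other (β γ : QQ i d) (hne : γ ≠ β) (hS : Sv (mB β) ≤ Sv (mB γ)) :
    coeff (mB β) (pB γ) = 0 := by
  classical
  rw [pB_eq, coeff_sum]
  apply Finset.sum_eq_zero
  intro σ _
  rw [coeff_smul]
  by_cases h1 : σ = 1
  · subst h1
    rw [termB_id, coeff_monomial, if_neg (fun h => hne (mB_inj h)), smul_zero]
  · rcases termB_ne γ σ h1 with h0 | ⟨N, hN, _, hS2⟩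
    · rw [h0, coeff_zero, smul_zero]
    · rw [hN, coeff_monomial, if_neg, smul_zero]
      intro h
      rw [h] at hS2
      omega

lemma termB_mem (β : QQ i d) (σ : Equiv.Perm (Fin d)) :
    termB β σ ∈ homogeneousSubmodule (Fin i) ℂ d := by
  by_cases h : σ = 1
  · subst h
    rw [termB_id, mem_homogeneousSubmodule]
    exact isHomogeneous_monomial _ (degree_mB β)
  · rcases termB_ne β σ h with h0 | ⟨N, hN, hdeg, _⟩
    · rw [h0]; exact Submodule.zero_mem _
    · rw [hN, mem_homogeneousSubmodule]
      exact isHomogeneous_monomial _ hdeg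

lemma pB_mem (β : QQ i d) : pB β ∈ homogeneousSubmodule (Fin i) ℂ d := by
  rw [pB_eq]
  apply Submodule.sum_mem
  intro σ _
  exact (homogeneousSubmodule (Fin i) ℂ d).toAddSubgroup.zsmul_mem (termB_mem β σ) _

/-! ### spanning -/

lemma sum_univ_eq_degree (a : Fin i →₀ ℕ) : ∑ j : Fin i, a j = Finsupp.degree a := by
  rw [Finsupp.degree_apply]
  exact (Finset.sum_subset (Finset.subset_univ _)
    (fun x _ hx => Finsupp.notMem_support_iff.1 hx)).symm

lemma Sv_le_bound (a : Fin i →₀ ℕ) (ha : Finsupp.degree a = d) : Sv a ≤ d * (i * i) := by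
  calc Sv a ≤ ∑ j : Fin i, (i * i) * a j := by
        apply Finset.sum_le_sum
        intro j _
        apply Nat.mul_le_mul_right
        have hj := j.isLt
        calc (j : ℕ)^2 = (j : ℕ) * (j : ℕ) := sq (j : ℕ) ▸ rfl
          _ ≤ i * i := Nat.mul_le_mul hj.le hj.le
    _ = (i * i) * ∑ j : Fin i, a j := by rw [Finset.mul_sum]
    _ = d * (i * i) := by rw [sum_univ_eq_degree, ha, Nat.mul_comm]

lemma monomial_mem_span (hd : 0 < d) (n : ℕ) :
    ∀ a : Fin i →₀ ℕ, Finsupp.degree a = d → d * (i * i) < Sv a + n →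
    (monomial a 1 : MvPolynomial (Fin i) ℂ) ∈
      Submodule.span ℂ (Set.range (pB (i := i) (d := d))) := by
  induction n with
  | zero =>
      intro a ha hlt
      exact absurd hlt (by have := Sv_le_bound a ha; omega)
  | succ n ih =>
      intro a ha hlt
      obtain ⟨β, rfl⟩ := exists_mB hd a ha
      have hsplit : pB β = termB β 1 +
          ∑ σ ∈ Finset.univ.erase (1 : Equiv.Perm (Fin d)),
            (Equiv.Perm.sign σ : ℤ) • termB β σ := by
        rw [pB_eq, ← Finset.add_sum_erase _ _ (Finset.mem_univ 1)]
        simp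
      have heq : (monomial (mB β) 1 : MvPolynomial (Fin i) ℂ) = pB β -
          ∑ σ ∈ Finset.univ.erase (1 : Equiv.Perm (Fin d)),
            (Equiv.Perm.sign σ : ℤ) • termB β σ := by
        rw [hsplit, termB_id]
        ring
      rw [heq]
      apply Submodule.sub_mem
      · exact Submodule.subset_span ⟨β, rfl⟩
      · apply Submodule.sum_mem
        intro σ hσ
        have hσ1 : σ ≠ 1 := (Finset.mem_erase.1 hσ).1
        rcases termB_ne β σ hσ1 with h0 | ⟨N, hN, hdeg, hS⟩
        · rw [h0, smul_zero]; exact Submodule.zero_mem _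
        · rw [hN]
          refine (Submodule.span ℂ (Set.range (pB (i := i) (d := d)))).toAddSubgroup.zsmul_mem
            (ih N hdeg ?_) _
          omega

end Lemma4Aux



/-- **Lemma 4**: the `binomial (i+d-1) d` maximal minors `det T_{i,d}[{1,…,d}|β]`,
`β ∈ Q_{d,i+d-1}`, form a basis of the space `HP(i,d)` of homogeneous polynomials of
degree `d` in `i` variables. -/
theorem maximal_minors_basis (i d : ℕ) (hi : 0 < i) (hd : 0 < d) :
    LinearIndependent ℂ
        (fun β : {t : Finset (Fin (i + d - 1)) // t.card = d} =>
          ((T i d).submatrix id fun c : Fin d => (β.1.orderIsoOfFin β.2 c : Fin (i + d - 1))).det) ∧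
      Submodule.span ℂ
          (Set.range fun β : {t : Finset (Fin (i + d - 1)) // t.card = d} =>
            ((T i d).submatrix id fun c : Fin d =>
              (β.1.orderIsoOfFin β.2 c : Fin (i + d - 1))).det) =
        MvPolynomial.homogeneousSubmodule (Fin i) ℂ d := by
  classical
  constructor
  · rw [Fintype.linearIndependent_iff]
    intro g hg
    by_contra hc
    push_neg at hc
    obtain ⟨β₀, hβ₀⟩ := hc
    have hg' : ∑ γ : Lemma4Aux.QQ i d, g γ • Lemma4Aux.pB γ = 0 := hg
    set s : Finset (Lemma4Aux.QQ i d) := Finset.univ.filter (fun β => g β ≠ 0) with hs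
    have hne : s.Nonempty := ⟨β₀, by simp [hs, hβ₀]⟩
    obtain ⟨β, hβs, hmin⟩ := Finset.exists_min_image s
      (fun β => Lemma4Aux.Sv (Lemma4Aux.mB β)) hne
    have hgβ : g β ≠ 0 := (Finset.mem_filter.1 hβs).2
    have h0 : MvPolynomial.coeff (Lemma4Aux.mB β)
        (∑ γ : Lemma4Aux.QQ i d, g γ • Lemma4Aux.pB γ) = 0 := by
      rw [hg']
      exact MvPolynomial.coeff_zero _
    rw [MvPolynomial.coeff_sum, Finset.sum_eq_single β] at h0
    · rw [MvPolynomial.coeff_smul, Lemma4Aux.coeff_pB_self] at h0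
      rw [smul_eq_mul, mul_one] at h0
      exact hgβ h0
    · intro γ _ hγ
      rw [MvPolynomial.coeff_smul]
      by_cases hgγ : g γ = 0
      · rw [hgγ, zero_smul]
      · have hγs : γ ∈ s := by simp [hs, hgγ]
        rw [Lemma4Aux.coeff_pB_other β γ hγ (hmin γ hγs), smul_zero]
    · intro h
      exact absurd (Finset.mem_univ β) h
  · apply le_antisymm
    · rw [Submodule.span_le]
      rintro q ⟨β, rfl⟩
      exact Lemma4Aux.pB_mem β
    · intro q hq
      have hqh : MvPolynomial.IsHomogeneous q d := hq
      rw [← MvPolynomial.support_sum_monomial_coeff q]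
      apply Submodule.sum_mem
      intro a ha
      have hdeg : Finsupp.degree a = d := by
        rw [Finsupp.degree_eq_weight_one]
        exact hqh (MvPolynomial.mem_support_iff.1 ha)
      have h1 : (MvPolynomial.monomial a) (MvPolynomial.coeff a q) =
          (MvPolynomial.coeff a q) • (MvPolynomial.monomial a) 1 := by
        rw [MvPolynomial.smul_monomial, smul_eq_mul, mul_one]
      rw [h1]
      exact Submodule.smul_mem _ _
        (Lemma4Aux.monomial_mem_span hd (d * (i * i) + 1) a hdeg (by omega))
end

section
/- Let m ≤ n be positive integers and let M be an m×n complex matrix of rank m−1. Then the linear subspace {X*M + M*Y : X an m×m complex matrix, Y an n×n complex matrix} of the space M(m,n) of m×n complex matrices has dimension (m−1)(n+1). -/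
open LinearMap Module Matrix

/-- The tangent space `{X*M + M*Y}` to the orbit of a rank `m - 1` matrix
`M ∈ M(m,n)` under the left-right `GL_m × GL_n` action has dimension
`(m-1)(n+1) = mn - (n-m+1)`, the dimension of the determinantal variety `M¹`. -/
theorem tangent_space_dimension (m n : ℕ) (hm : 0 < m) (hmn : m ≤ n)
    (M : Matrix (Fin m) (Fin n) ℂ) (hrank : M.rank = m - 1) :
    Module.finrank ℂ
        ↥(Submodule.span ℂ
          {P : Matrix (Fin m) (Fin n) ℂ |
            ∃ (X : Matrix (Fin m) (Fin m) ℂ) (Y : Matrix (Fin n) (Fin n) ℂ),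
              P = X * M + M * Y}) = (m - 1) * (n + 1) := by
  classical
  set f : (Fin n → ℂ) →ₗ[ℂ] (Fin m → ℂ) := M.mulVecLin with hf
  set K : Submodule ℂ (Fin n → ℂ) := LinearMap.ker f with hK
  set R : Submodule ℂ (Fin m → ℂ) := LinearMap.range f with hR
  -- the map ρ : P ↦ (mkQ ∘ P ∘ subtype)
  let ρ : Matrix (Fin m) (Fin n) ℂ →ₗ[ℂ] (K →ₗ[ℂ] ((Fin m → ℂ) ⧸ R)) :=
    { toFun := fun P => R.mkQ.comp (P.mulVecLin.comp K.subtype)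
      map_add' := by
        intro P Q
        show R.mkQ ∘ₗ (P + Q).mulVecLin ∘ₗ K.subtype = _
        rw [Matrix.mulVecLin_add, LinearMap.add_comp, LinearMap.comp_add]
      map_smul' := by
        intro c P
        show R.mkQ ∘ₗ (c • P).mulVecLin ∘ₗ K.subtype = _
        have : (c • P).mulVecLin = c • P.mulVecLin := by
          ext v; simp [Matrix.smul_mulVec]
        rw [this, LinearMap.smul_comp, LinearMap.comp_smul]
        rfl }
  -- the span equals the kernel of ρ
  have hspan : Submodule.span ℂ
      {P : Matrix (Fin m) (Fin n) ℂ |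
        ∃ (X : Matrix (Fin m) (Fin m) ℂ) (Y : Matrix (Fin n) (Fin n) ℂ),
          P = X * M + M * Y} = LinearMap.ker ρ := by
    apply le_antisymm
    · rw [Submodule.span_le]
      rintro P ⟨X, Y, rfl⟩
      simp only [SetLike.mem_coe, LinearMap.mem_ker]
      ext k
      have hk : M *ᵥ (k : Fin n → ℂ) = 0 := k.2
      have : (X * M + M * Y) *ᵥ (k : Fin n → ℂ) = M *ᵥ (Y *ᵥ (k : Fin n → ℂ)) := by
        rw [Matrix.add_mulVec, ← Matrix.mulVec_mulVec, ← Matrix.mulVec_mulVec, hk,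
          Matrix.mulVec_zero, zero_add]
      show R.mkQ ((X * M + M * Y).mulVecLin (K.subtype k)) = 0
      rw [Matrix.mulVecLin_apply, Submodule.subtype_apply, this, Submodule.mkQ_apply,
        Submodule.Quotient.mk_eq_zero]
      exact ⟨Y *ᵥ (k : Fin n → ℂ), rfl⟩
    · intro P hP
      apply Submodule.subset_span
      -- P maps K into R; build X and Y
      have hPk : ∀ k : K, P.mulVecLin (k : Fin n → ℂ) ∈ R := by
        intro k
        have := LinearMap.congr_fun (LinearMap.mem_ker.mp hP) k
        have h0 : R.mkQ (P.mulVecLin (K.subtype k)) = 0 := this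
        rwa [Submodule.mkQ_apply, Submodule.Quotient.mk_eq_zero] at h0
      set p : (Fin n → ℂ) →ₗ[ℂ] (Fin m → ℂ) := P.mulVecLin with hp
      obtain ⟨g', hg'⟩ := f.rangeRestrict.exists_rightInverse_of_surjective
        (LinearMap.range_eq_top.mpr f.surjective_rangeRestrict)
      have hfg : ∀ r : R, f (g' r) = (r : Fin m → ℂ) := by
        intro r
        have h1 : f.rangeRestrict (g' r) = r := LinearMap.congr_fun hg' r
        have h2 : (f.rangeRestrict (g' r) : Fin m → ℂ) = f (g' r) := rfl
        rw [← h2, h1]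
      set p₁ : K →ₗ[ℂ] R := LinearMap.codRestrict R (p.comp K.subtype) (fun k => hPk k) with hp₁
      obtain ⟨y, hy⟩ := (g'.comp p₁).exists_extend
      set q : (Fin n → ℂ) →ₗ[ℂ] (Fin m → ℂ) := p - f.comp y with hq
      have hqK : ∀ v : Fin n → ℂ, v ∈ K → q v = 0 := by
        intro v hv
        have h1 : y v = g' (p₁ ⟨v, hv⟩) := LinearMap.congr_fun hy ⟨v, hv⟩
        have h2 : f (y v) = p v := by
          rw [h1, hfg]
          rfl
        simp [hq, h2]
      obtain ⟨x, hx⟩ := (q.comp g').exists_extend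
      have hxf : x.comp f = q := by
        refine LinearMap.ext fun v => ?_
        have h1 : f v ∈ R := ⟨v, rfl⟩
        have h2 : x (f v) = q (g' ⟨f v, h1⟩) := by
          have := LinearMap.congr_fun hx (⟨f v, h1⟩ : R)
          simpa using this
        have h3 : g' (⟨f v, h1⟩ : R) - v ∈ K := by
          rw [hK, LinearMap.mem_ker, map_sub, hfg, sub_eq_zero]
        have h4 : q (g' ⟨f v, h1⟩) = q v := by
          have := hqK _ h3
          rw [map_sub, sub_eq_zero] at this
          exact this
        simp only [LinearMap.comp_apply]
        rw [h2, h4]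
      refine ⟨Matrix.toLin'.symm x, Matrix.toLin'.symm y, ?_⟩
      apply Matrix.toLin'.injective
      rw [map_add, Matrix.toLin'_mul, Matrix.toLin'_mul, LinearEquiv.apply_symm_apply,
        LinearEquiv.apply_symm_apply, Matrix.toLin'_apply', Matrix.toLin'_apply']
      rw [← hf, ← hp, hxf]
      rw [hq]
      abel
  -- ρ is surjective
  have hsurj : Function.Surjective ρ := by
    intro ψ
    obtain ⟨h, hh⟩ := R.mkQ.exists_rightInverse_of_surjective
      (LinearMap.range_eq_top.mpr R.mkQ_surjective)
    obtain ⟨p, hp⟩ := (h.comp ψ).exists_extend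
    refine ⟨Matrix.toLin'.symm p, ?_⟩
    have hmv : (Matrix.toLin'.symm p).mulVecLin = p := by
      rw [← Matrix.toLin'_apply', LinearEquiv.apply_symm_apply]
    show R.mkQ ∘ₗ (Matrix.toLin'.symm p).mulVecLin ∘ₗ K.subtype = ψ
    rw [hmv, hp, ← LinearMap.comp_assoc, hh, LinearMap.id_comp]
  -- dimension count
  rw [hspan]
  have hrange : LinearMap.range ρ = ⊤ := LinearMap.range_eq_top.mpr hsurj
  have h1 : finrank ℂ (LinearMap.range ρ) + finrank ℂ (LinearMap.ker ρ)
      = finrank ℂ (Matrix (Fin m) (Fin n) ℂ) := LinearMap.finrank_range_add_finrank_ker ρ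
  have hmat : finrank ℂ (Matrix (Fin m) (Fin n) ℂ) = m * n := by
    rw [Module.finrank_matrix]
    simp
  have hR' : finrank ℂ R = m - 1 := hrank
  have hKr : (m - 1) + finrank ℂ K = n := by
    have := LinearMap.finrank_range_add_finrank_ker f
    rw [← hR, ← hK, hR'] at this
    rw [this]
    simp
  have hQ : finrank ℂ ((Fin m → ℂ) ⧸ R) = 1 := by
    have h2 := Submodule.finrank_quotient_add_finrank R
    rw [hR'] at h2
    have h3 : finrank ℂ (Fin m → ℂ) = m := by simp
    omega
  have h4 : finrank ℂ (LinearMap.range ρ) = finrank ℂ K := by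
    rw [hrange, finrank_top, Module.finrank_linearMap, hQ, mul_one]
  rw [h4, hmat] at h1
  have key : (m - 1) * (n + 1) + (n - m + 1) = m * n := by
    have h5 : 1 ≤ m := hm
    zify [h5, hmn]
    ring
  have hKval : finrank ℂ K = n - m + 1 := by omega
  rw [hKval] at h1
  omega
end

section
/- Let m ≤ n be positive integers and let λ_1, …, λ_{n−m+1} be complex numbers, not all zero. Then the m×n matrix λ_1 J_1 + λ_2 J_2 + … + λ_{n−m+1} J_{n−m+1} has rank m. Consequently, the standard diagonal subspace 𝔏 = span(J_1, …, J_{n−m+1}) intersects the set of m×n matrices of non-maximal rank only in the zero matrix. -/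
lemma rank_sum_smul_J (m n : ℕ) (hm : 0 < m) (hmn : m ≤ n)
    (lam : Fin (n - m + 1) → ℂ) (hlam : lam ≠ 0) :
    (∑ s : Fin (n - m + 1), lam s • J m n s).rank = m := by
  set A := ∑ s : Fin (n - m + 1), lam s • J m n s with hA
  -- the set of indices with nonzero coefficient
  have hTne : (Finset.univ.filter (fun s => lam s ≠ 0)).Nonempty := by
    by_contra h
    apply hlam
    funext s
    rw [Finset.not_nonempty_iff_eq_empty, Finset.filter_eq_empty_iff] at h
    simpa using h (Finset.mem_univ s)
  set s0 := (Finset.univ.filter (fun s => lam s ≠ 0)).min' hTne with hs0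
  have hs0ne : lam s0 ≠ 0 := by
    have := (Finset.univ.filter (fun s => lam s ≠ 0)).min'_mem hTne
    simpa using this
  have hmin : ∀ s : Fin (n - m + 1), s < s0 → lam s = 0 := by
    intro s hs
    by_contra h
    have : s0 ≤ s := Finset.min'_le _ _ (by simpa using h)
    exact absurd hs (not_lt.mpr this)
  -- column selection map
  have hf : ∀ i : Fin m, (i : ℕ) + (s0 : ℕ) < n := by
    intro i
    have h1 := i.isLt
    have h2 := s0.isLt
    omega
  set f : Fin m → Fin n := fun i => ⟨(i : ℕ) + (s0 : ℕ), hf i⟩ with hfdef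
  set B := A.submatrix id f with hB
  have hAentry : ∀ (i : Fin m) (j : Fin n),
      A i j = ∑ s : Fin (n - m + 1), lam s * (if (j : ℕ) = (i : ℕ) + (s : ℕ) then 1 else 0) := by
    intro i j
    rw [hA]
    simp [Matrix.sum_apply, J]
  -- B is upper triangular with diagonal lam s0
  have hdiag : ∀ i : Fin m, B i i = lam s0 := by
    intro i
    rw [hB, Matrix.submatrix_apply, hAentry]
    have : ∀ s : Fin (n - m + 1),
        lam s * (if ((f i : ℕ)) = (i : ℕ) + (s : ℕ) then 1 else 0)
          = if s = s0 then lam s else 0 := by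
      intro s
      by_cases h : s = s0
      · subst h; simp [hfdef]
      · have : ¬ ((f i : ℕ) = (i : ℕ) + (s : ℕ)) := by
          simp only [hfdef]
          intro hEq
          exact h (Fin.ext (by omega))
        simp [this, h]
    simp only [id_eq]
    rw [Finset.sum_congr rfl (fun s _ => this s)]
    simp
  have htri : B.BlockTriangular id := by
    intro i j hij
    simp only [id] at hij
    rw [hB, Matrix.submatrix_apply, hAentry]
    simp only [id_eq]
    apply Finset.sum_eq_zero
    intro s _
    by_cases h : (f j : ℕ) = (i : ℕ) + (s : ℕ)
    · have hs : s < s0 := by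
        simp only [hfdef] at h
        have hji : (j : ℕ) < (i : ℕ) := hij
        exact Fin.lt_def.mpr (by omega)
      simp [hmin s hs]
    · simp [h]
  have hdet : B.det = lam s0 ^ m := by
    rw [Matrix.det_of_upperTriangular htri]
    simp [hdiag]
  have hBunit : IsUnit B := by
    rw [Matrix.isUnit_iff_isUnit_det, hdet, isUnit_iff_ne_zero]
    exact pow_ne_zero _ hs0ne
  have hrankB : B.rank = m := by
    rw [Matrix.rank_of_isUnit B hBunit]
    simp
  -- B = A * (column selection matrix), hence rank B ≤ rank A
  have hBeq : B = A * (1 : Matrix (Fin n) (Fin n) ℂ).submatrix (Equiv.refl (Fin n)) f := by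
    rw [Matrix.mul_submatrix_one]
    rfl
  have hle : (m : ℕ) ≤ A.rank := by
    calc (m : ℕ) = B.rank := hrankB.symm
    _ ≤ A.rank := by rw [hBeq]; exact Matrix.rank_mul_le_left _ _
  exact le_antisymm (Matrix.rank_le_height A) hle

/-- Any nonzero linear combination `λ₁ J₁ + ⋯ + λ_{n-m+1} J_{n-m+1}` of the diagonal
unit matrices has full rank `m`; consequently, the standard diagonal subspace
`𝔏 = span(J₁, …, J_{n-m+1})` meets the set of `m × n` matrices of non-maximal rank
only in the zero matrix. -/
theorem standard_diagonal_transversal (m n : ℕ) (hm : 0 < m) (hmn : m ≤ n) :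
    (∀ lam : Fin (n - m + 1) → ℂ, lam ≠ 0 →
      (∑ s : Fin (n - m + 1), lam s • J m n s).rank = m) ∧
    ∀ B ∈ Submodule.span ℂ (Set.range (J m n)), B.rank < m → B = 0 := by
  refine ⟨rank_sum_smul_J m n hm hmn, ?_⟩
  intro B hB hrank
  obtain ⟨c, hc⟩ := (Finsupp.mem_span_range_iff_exists_finsupp).mp hB
  by_cases hc0 : (c : Fin (n - m + 1) → ℂ) = 0
  · rw [← hc]
    rw [Finsupp.sum_fintype _ _ (by intro s; simp)]
    apply Finset.sum_eq_zero
    intro s _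
    have : c s = 0 := by rw [hc0]; rfl
    simp [this]
  · exfalso
    have : B.rank = m := by
      rw [← hc, Finsupp.sum_fintype _ _ (by intro s; simp)]
      exact rank_sum_smul_J m n hm hmn _ hc0
    omega
end

section
/- The polynomial D_0 = −12 a_{13} a_{22}² a_{11} + a_{22}² a_{12}² + 12 a_{13} a_{22} a_{11}² + a_{11}² a_{23}² + 4 a_{21} a_{12}³ − 4 a_{21} a_{23}³ + a_{11}² a_{12}² + 12 a_{12} a_{23}² a_{21} − 12 a_{12}² a_{23} a_{21} − 2 a_{12} a_{23} a_{22}² − 2 a_{12} a_{23} a_{11}² − 2 a_{22} a_{11} a_{23}² − 18 a_{13} a_{22} a_{23} a_{21} − 2 a_{22} a_{11} a_{12}² + 18 a_{13} a_{22} a_{21} a_{12} + 18 a_{11} a_{23} a_{13} a_{21} − 18 a_{21} a_{13} a_{12} a_{11} + 4 a_{13} a_{22}³ − 27 a_{21}² a_{13}² − 4 a_{13} a_{11}³ + 4 a_{12} a_{23} a_{22} a_{11} + a_{22}² a_{23}², regarded as a multivariate polynomial over ℂ in the six variables a_{11}, a_{12}, a_{13}, a_{21}, a_{22}, a_{23},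 is irreducible in ℂ[a_{11}, a_{12}, a_{13}, a_{21}, a_{22}, a_{23}]. -/
open MvPolynomial

/-- The variables `a₁₁, a₁₂, a₁₃, a₂₁, a₂₂, a₂₃` of `ℂ[a₁₁, a₁₂, a₁₃, a₂₁, a₂₂, a₂₃]`. -/
noncomputable def a11 : MvPolynomial (Fin 6) ℂ := X 0
noncomputable def a12 : MvPolynomial (Fin 6) ℂ := X 1
noncomputable def a13 : MvPolynomial (Fin 6) ℂ := X 2
noncomputable def a21 : MvPolynomial (Fin 6) ℂ := X 3
noncomputable def a22 : MvPolynomial (Fin 6) ℂ := X 4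
noncomputable def a23 : MvPolynomial (Fin 6) ℂ := X 5

namespace D0Aux

set_option maxHeartbeats 1000000
set_option synthInstance.maxHeartbeats 1000000

abbrev R5 : Type := MvPolynomial (Fin 5) ℂ
abbrev KK : Type := FractionRing R5
noncomputable abbrev f : R5 →+* KK := algebraMap R5 KK

noncomputable def c2 : R5 := -27 * X 2 ^ 2
noncomputable def c1 : R5 := 4 * (X 3 - X 1) ^ 3 + 18 * X 2 * (X 3 - X 1) * (X 0 - X 4)
noncomputable def c0 : R5 := (X 1 - X 3) ^ 2 * (X 0 - X 4) ^ 2 + 4 * X 2 * (X 0 - X 4) ^ 3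
noncomputable def Spoly : R5 := (X 1 - X 3) ^ 2 + 3 * X 2 * (X 0 - X 4)

lemma disc_eq : c1 ^ 2 - 4 * c2 * c0 = 16 * Spoly ^ 3 := by
  unfold c1 c2 c0 Spoly; ring

noncomputable def φ : R5 →ₐ[ℂ] Polynomial ℂ := aeval ![1, 0, Polynomial.X, 0, 0]

lemma φ_S : φ Spoly = 3 * Polynomial.X := by
  simp [φ, Spoly]

lemma deg1 : (3 * Polynomial.X : Polynomial ℂ).natDegree = 1 := by
  have h3 : (3 * Polynomial.X : Polynomial ℂ) = Polynomial.C 3 * Polynomial.X := by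
    rw [map_ofNat Polynomial.C 3]
  rw [h3, Polynomial.natDegree_C_mul (by norm_num), Polynomial.natDegree_X]

lemma Spoly_ne_zero : Spoly ≠ 0 := by
  intro h
  have := congrArg φ h
  rw [φ_S, map_zero] at this
  simp [deg1] at this

lemma Spoly_not_sq (r : R5) : r ^ 2 ≠ Spoly := by
  intro h
  have h' := congrArg φ h
  rw [φ_S, map_pow] at h'
  have h1 := congrArg Polynomial.natDegree h'
  rw [Polynomial.natDegree_pow, deg1] at h1
  omega

lemma not_X2_dvd : ¬ (X 2 : R5) ∣ (X 1 - X 3) ^ 2 * (X 0 - X 4) ^ 2 := by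
  rintro ⟨w, hw⟩
  have := congrArg (aeval (![1, 1, 0, 0, 0] : Fin 5 → ℂ)) hw
  simp at this

noncomputable def e2 : MvPolynomial (Fin 5) ℂ ≃ₐ[ℂ] Polynomial (MvPolynomial (Fin 4) ℂ) :=
  (renameEquiv ℂ (Equiv.swap (0 : Fin 5) 2)).trans (MvPolynomial.finSuccEquiv ℂ 4)

lemma prime_X2 : Prime (X 2 : R5) := by
  have h : e2 (X 2) = Polynomial.X := by
    simp [e2, finSuccEquiv_X_zero]
  exact (MulEquiv.prime_iff e2.toMulEquiv).mp (by
    show Prime (e2 (X 2)); rw [h]; exact Polynomial.prime_X)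

lemma isUnit_neg27 : IsUnit (-27 : R5) := by
  have h : (-27 : R5) = C (-27 : ℂ) := by
    rw [map_neg, map_ofNat MvPolynomial.C 27]
  rw [h]
  exact (isUnit_iff_ne_zero.mpr (by norm_num)).map MvPolynomial.C

lemma coeff_unit {r : R5} (hr0 : r ≠ 0) (h2 : r ∣ c2) (h0 : r ∣ c0) : IsUnit r := by
  by_contra hu
  obtain ⟨p, hp_irr, hpr⟩ := WfDvdMonoid.exists_irreducible_factor hu hr0
  have hp : Prime p := UniqueFactorizationMonoid.irreducible_iff_prime.mp hp_irr
  have hpc2 : p ∣ -27 * X 2 ^ 2 := hpr.trans h2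
  rcases hp.2.2 _ _ hpc2 with h | h
  · exact hp.not_unit (isUnit_of_dvd_unit h isUnit_neg27)
  · have hpX : p ∣ X 2 := hp.dvd_of_dvd_pow h
    have hassoc := hp_irr.associated_of_dvd prime_X2.irreducible hpX
    have hX2r : (X 2 : R5) ∣ r := hassoc.symm.dvd.trans hpr
    have hc0 : (X 2 : R5) ∣ c0 := hX2r.trans h0
    have h4 : (X 2 : R5) ∣ 4 * X 2 * (X 0 - X 4) ^ 3 :=
      Dvd.dvd.mul_right (Dvd.dvd.mul_left dvd_rfl 4) _
    have hP4 : (X 2 : R5) ∣ (X 1 - X 3) ^ 2 * (X 0 - X 4) ^ 2 := by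
      have := dvd_sub hc0 h4
      simpa [c0] using this
    exact not_X2_dvd hP4

lemma hc2 : c2 ≠ 0 := by
  have := prime_X2
  have hX : (X 2 : R5) ^ 2 ≠ 0 := pow_ne_zero _ this.ne_zero
  exact mul_ne_zero (fun h => by simpa [h] using isUnit_neg27.ne_zero) hX

lemma finj : Function.Injective f := IsFractionRing.injective R5 KK

lemma hdisc : ∀ s : KK, discrim (f c2) (f c1) (f c0) ≠ s ^ 2 := by
  intro s hs
  rw [discrim] at hs
  have hs' : f (16 * Spoly ^ 3) = s ^ 2 := by
    rw [← disc_eq, map_sub, map_pow, map_mul, map_mul, map_ofNat]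
    exact hs
  have hfS : f Spoly ≠ 0 := fun h => Spoly_ne_zero (finj (by rw [h, map_zero]))
  set t := s / (4 * f Spoly) with ht_def
  have ht : t ^ 2 = f Spoly := by
    rw [ht_def, div_pow, ← hs', map_mul, map_pow, map_ofNat]
    field_simp
    ring
  have hint : IsIntegral R5 t := by
    refine ⟨Polynomial.X ^ 2 - Polynomial.C Spoly,
      Polynomial.monic_X_pow_sub_C Spoly two_ne_zero, ?_⟩
    rw [Polynomial.eval₂_sub, Polynomial.eval₂_X_pow, Polynomial.eval₂_C]
    show t ^ 2 - f Spoly = 0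
    rw [ht, sub_self]
  obtain ⟨r, hr⟩ := IsIntegrallyClosed.isIntegral_iff.mp hint
  refine Spoly_not_sq r (finj ?_)
  rw [map_pow]
  show (f r) ^ 2 = f Spoly
  rw [hr, ht]

noncomputable def P : Polynomial R5 :=
  Polynomial.C c2 * Polynomial.X ^ 2 + Polynomial.C c1 * Polynomial.X + Polynomial.C c0

lemma Pm_eq : P.map f =
    Polynomial.C (f c2) * Polynomial.X ^ 2 + Polynomial.C (f c1) * Polynomial.X
      + Polynomial.C (f c0) := by
  simp [P, Polynomial.map_add, Polynomial.map_mul, Polynomial.map_pow]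

lemma fc2_ne : f c2 ≠ 0 := fun h => hc2 (finj (by rw [h, map_zero]))

lemma Pm_natDegree : (P.map f).natDegree = 2 := by
  rw [Pm_eq]; exact Polynomial.natDegree_quadratic fc2_ne

lemma Pm_ne_zero : P.map f ≠ 0 := fun h => by
  have := Pm_natDegree; rw [h] at this; simp at this

lemma Pm_irred : Irreducible (P.map f) := by
  rw [Polynomial.irreducible_iff_roots_eq_zero_of_degree_le_three (by rw [Pm_natDegree])
    (by rw [Pm_natDegree]; norm_num)]
  rw [Multiset.eq_zero_iff_forall_notMem]
  intro x hx
  rw [Polynomial.mem_roots Pm_ne_zero] at hx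
  have hev : Polynomial.eval x (P.map f) = 0 := hx
  rw [Pm_eq] at hev
  simp only [Polynomial.eval_add, Polynomial.eval_mul, Polynomial.eval_pow,
    Polynomial.eval_C, Polynomial.eval_X] at hev
  exact quadratic_ne_zero_of_discrim_ne_sq hdisc x (by rw [← hev]; ring)

lemma P_coeff2 : P.coeff 2 = c2 := by
  simp [P, Polynomial.coeff_add, Polynomial.coeff_C_mul, Polynomial.coeff_X_pow]

lemma P_coeff0 : P.coeff 0 = c0 := by
  simp [P, Polynomial.coeff_add, Polynomial.coeff_C_mul]

lemma P_ne_zero : P ≠ 0 := fun h => hc2 (by rw [← P_coeff2, h, Polynomial.coeff_zero])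

lemma unit_of {g h : Polynomial R5} (hgh : P = g * h) (hu : IsUnit (g.map f)) : IsUnit g := by
  obtain ⟨u, hu1, hu2⟩ := Polynomial.isUnit_iff.mp hu
  have hdeg : g.natDegree = 0 := by
    rw [← Polynomial.natDegree_map_eq_of_injective finj g, ← hu2, Polynomial.natDegree_C]
  obtain ⟨rr, hrr⟩ := Polynomial.natDegree_eq_zero.mp hdeg
  have hdvd : Polynomial.C rr ∣ P := by rw [hrr]; exact ⟨h, hgh⟩
  have hd := (Polynomial.C_dvd_iff_dvd_coeff rr P).mp hdvd
  have h2 := hd 2; rw [P_coeff2] at h2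
  have h0 := hd 0; rw [P_coeff0] at h0
  have hrr0 : rr ≠ 0 := by
    rintro rfl
    apply P_ne_zero
    rw [hgh, ← hrr, map_zero, zero_mul]
  rw [← hrr]
  exact (Polynomial.isUnit_C).mpr (coeff_unit hrr0 h2 h0)

lemma P_irred : Irreducible P := by
  constructor
  · intro h
    exact Pm_irred.not_isUnit (by
      have := h.map (Polynomial.mapRingHom f)
      rwa [Polynomial.coe_mapRingHom] at this)
  · intro g h hgh
    have hm : P.map f = g.map f * h.map f := by rw [hgh, Polynomial.map_mul]
    rcases Pm_irred.isUnit_or_isUnit hm with hu | hu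
    · exact Or.inl (unit_of hgh hu)
    · exact Or.inr (unit_of (by rw [hgh, mul_comm]) hu)

noncomputable def D0 : MvPolynomial (Fin 6) ℂ :=
  -12 * a13 * a22 ^ 2 * a11 + a22 ^ 2 * a12 ^ 2 + 12 * a13 * a22 * a11 ^ 2 +
    a11 ^ 2 * a23 ^ 2 + 4 * a21 * a12 ^ 3 - 4 * a21 * a23 ^ 3 + a11 ^ 2 * a12 ^ 2 +
    12 * a12 * a23 ^ 2 * a21 - 12 * a12 ^ 2 * a23 * a21 - 2 * a12 * a23 * a22 ^ 2 -
    2 * a12 * a23 * a11 ^ 2 - 2 * a22 * a11 * a23 ^ 2 - 18 * a13 * a22 * a23 * a21 -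
    2 * a22 * a11 * a12 ^ 2 + 18 * a13 * a22 * a21 * a12 + 18 * a11 * a23 * a13 * a21 -
    18 * a21 * a13 * a12 * a11 + 4 * a13 * a22 ^ 3 - 27 * a21 ^ 2 * a13 ^ 2 -
    4 * a13 * a11 ^ 3 + 4 * a12 * a23 * a22 * a11 + a22 ^ 2 * a23 ^ 2

noncomputable def σ6 : Equiv.Perm (Fin 6) := Equiv.swap 0 2

lemma s0 : σ6 0 = 2 := by decide
lemma s1 : σ6 1 = 1 := by decide
lemma s2 : σ6 2 = 0 := by decide
lemma s3 : σ6 3 = 3 := by decide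
lemma s4 : σ6 4 = 4 := by decide
lemma s5 : σ6 5 = 5 := by decide

lemma fs0 : MvPolynomial.finSuccEquiv ℂ 5 (X 0) = Polynomial.X := finSuccEquiv_X_zero
lemma fs1 : MvPolynomial.finSuccEquiv ℂ 5 (X 1) = Polynomial.C (X 0) := by
  have h : (1 : Fin 6) = (0 : Fin 5).succ := rfl
  rw [h, finSuccEquiv_X_succ]
lemma fs2 : MvPolynomial.finSuccEquiv ℂ 5 (X 2) = Polynomial.C (X 1) := by
  have h : (2 : Fin 6) = (1 : Fin 5).succ := rfl
  rw [h, finSuccEquiv_X_succ]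
lemma fs3 : MvPolynomial.finSuccEquiv ℂ 5 (X 3) = Polynomial.C (X 2) := by
  have h : (3 : Fin 6) = (2 : Fin 5).succ := rfl
  rw [h, finSuccEquiv_X_succ]
lemma fs4 : MvPolynomial.finSuccEquiv ℂ 5 (X 4) = Polynomial.C (X 3) := by
  have h : (4 : Fin 6) = (3 : Fin 5).succ := rfl
  rw [h, finSuccEquiv_X_succ]
lemma fs5 : MvPolynomial.finSuccEquiv ℂ 5 (X 5) = Polynomial.C (X 4) := by
  have h : (5 : Fin 6) = (4 : Fin 5).succ := rfl
  rw [h, finSuccEquiv_X_succ]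

lemma keycomp : MvPolynomial.finSuccEquiv ℂ 5 (rename σ6 D0) = P := by
  simp only [D0, a11, a12, a13, a21, a22, a23, map_add, map_sub, map_mul, map_neg, map_pow,
    map_ofNat, rename_X, s0, s1, s2, s3, s4, s5, fs0, fs1, fs2, fs3, fs4, fs5]
  simp only [P, c2, c1, c0, map_add, map_sub, map_mul, map_neg, map_pow, map_ofNat]
  ring

lemma D0_irred : Irreducible D0 := by
  have h1 : Irreducible (rename σ6 D0) :=
    (MulEquiv.irreducible_iff (MvPolynomial.finSuccEquiv ℂ 5)).mp (keycomp ▸ P_irred)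
  have h2 : Irreducible (renameEquiv ℂ σ6 D0) := by
    rwa [renameEquiv_apply]
  exact (MulEquiv.irreducible_iff (renameEquiv ℂ σ6)).mp h2

end D0Aux

/-- The polynomial `D₀` of Example 3 (the defining polynomial of the hypersurface of
`2 × 3` complex matrices with a multiple eigenvalue w.r.t. the standard diagonal
subspace) is irreducible in `ℂ[a₁₁, a₁₂, a₁₃, a₂₁, a₂₂, a₂₃]`. -/
theorem D0_irreducible :
    Irreducible
      (-12 * a13 * a22 ^ 2 * a11 + a22 ^ 2 * a12 ^ 2 + 12 * a13 * a22 * a11 ^ 2 +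
        a11 ^ 2 * a23 ^ 2 + 4 * a21 * a12 ^ 3 - 4 * a21 * a23 ^ 3 + a11 ^ 2 * a12 ^ 2 +
        12 * a12 * a23 ^ 2 * a21 - 12 * a12 ^ 2 * a23 * a21 - 2 * a12 * a23 * a22 ^ 2 -
        2 * a12 * a23 * a11 ^ 2 - 2 * a22 * a11 * a23 ^ 2 - 18 * a13 * a22 * a23 * a21 -
        2 * a22 * a11 * a12 ^ 2 + 18 * a13 * a22 * a21 * a12 + 18 * a11 * a23 * a13 * a21 -
        18 * a21 * a13 * a12 * a11 + 4 * a13 * a22 ^ 3 - 27 * a21 ^ 2 * a13 ^ 2 -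
        4 * a13 * a11 ^ 3 + 4 * a12 * a23 * a22 * a11 + a22 ^ 2 * a23 ^ 2) :=
  D0Aux.D0_irred
end
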